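/- arXiv:1810.09063 — 12 statements merged into one kernel-verified Lean document; each statement's English description precedes it below -/
import Mathlib

section
/- For every z ∈ ℝ, the infimum of the function a ↦ z·(∑_{i=1}^N a_i) + c₁(a) over the box A is attained at the point â(z) defined componentwise by â_i(z) := μ_i · min(z⁻, A_max), i = 1, …, N. Moreover, if z⁻ ≤ A_max, then H_m(z) = (1/2) μ̄ (z⁻)². -/
/-!
The objective `z ∑ aᵢ + ½ ∑ aᵢ²/μᵢ` separates over the coordinates, so it suffices to minimise
the strictly convex parabola `a ↦ z a + ½ a²/μ` over `[0, μ A_max]`. Its unconstrained minimiser is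
`-μ z`, so the constrained one is `μ` times the clamp of `-z` to `[0, A_max]`, which is
`μ · min (z⁻, A_max)`; optimality follows from the first-order condition
`(a - â)(z + â/μ) ≥ 0`. When `z⁻ ≤ A_max` the optimum is `μ z⁻` and, as `z z⁻ = -(z⁻)²`, the
coordinate value is `-½ μ (z⁻)²`.
-/

open Finset

lemma mul_max_neg_zero (z : ℝ) : z * max (-z) 0 = -max (-z) 0 ^ 2 := by
  rcases le_total (-z) 0 with hz | hz
  · simp [max_eq_right hz]
  · rw [max_eq_left hz]; ring

lemma quadratic_sub_ge_linear {μ : ℝ} (hμ : 0 < μ) (z a b : ℝ) :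
    (a - b) * (z + b / μ) ≤ z * a + 1 / 2 * (a ^ 2 / μ) - (z * b + 1 / 2 * (b ^ 2 / μ)) := by
  have hsq : 0 ≤ (a - b) ^ 2 / (2 * μ) := by positivity
  have hid : z * a + 1 / 2 * (a ^ 2 / μ) - (z * b + 1 / 2 * (b ^ 2 / μ))
      = (a - b) * (z + b / μ) + (a - b) ^ 2 / (2 * μ) := by
    field_simp; ring
  linarith

lemma sub_mul_clamp_nonneg {μ M z a : ℝ} (hμ : 0 < μ) (ha₀ : 0 ≤ a) (haM : a ≤ μ * M) :
    0 ≤ (a - μ * min (max (-z) 0) M) * (z + min (max (-z) 0) M) := by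
  rcases le_total (-z) 0 with hz | hz
  · have hM : 0 ≤ M := nonneg_of_mul_nonneg_right (ha₀.trans haM) hμ
    rw [max_eq_right hz, min_eq_left hM]
    simpa using mul_nonneg ha₀ (neg_nonpos.1 hz)
  · rw [max_eq_left hz]
    rcases le_total (-z) M with hzM | hzM
    · simp [min_eq_left hzM]
    · rw [min_eq_right hzM]
      exact mul_nonneg_of_nonpos_of_nonpos (by linarith) (by linarith)

lemma clamp_minimizes_quadratic {μ M z a : ℝ} (hμ : 0 < μ) (ha₀ : 0 ≤ a) (haM : a ≤ μ * M) :
    z * (μ * min (max (-z) 0) M) + 1 / 2 * ((μ * min (max (-z) 0) M) ^ 2 / μ)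
      ≤ z * a + 1 / 2 * (a ^ 2 / μ) := by
  have hfoc := sub_mul_clamp_nonneg (z := z) hμ ha₀ haM
  have hlin := quadratic_sub_ge_linear hμ z a (μ * min (max (-z) 0) M)
  rw [mul_div_cancel_left₀ _ hμ.ne'] at hlin
  linarith

theorem first_best_drift_hamiltonian_general
    (N : ℕ) (μ : Fin N → ℝ) (hμ : ∀ i, 0 < μ i)
    (Amax : ℝ) (hAmax : 0 < Amax)
    (A : Set (Fin N → ℝ)) (hA : A = {a | ∀ i, a i ∈ Set.Icc 0 (μ i * Amax)})
    (c₁ : (Fin N → ℝ) → ℝ) (hc₁ : c₁ = fun a => (1 / 2) * ∑ i, (a i) ^ 2 / μ i)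
    (μbar : ℝ) (hμbar : μbar = ∑ i, μ i)
    (Hm : ℝ → ℝ)
    (hHm : Hm = fun z => - sInf ((fun a => z * (∑ i, a i) + c₁ a) '' A))
    (z : ℝ) (ahat : Fin N → ℝ)
    (hahat : ahat = fun i => μ i * min (max (-z) 0) Amax) :
    ahat ∈ A ∧
      (∀ a ∈ A, z * (∑ i, ahat i) + c₁ ahat ≤ z * (∑ i, a i) + c₁ a) ∧
      (max (-z) 0 ≤ Amax → Hm z = (1 / 2) * μbar * (max (-z) 0) ^ 2) := by
  subst hA hc₁ hμbar hHm hahat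
  have hmem : ∀ i, μ i * min (max (-z) 0) Amax ∈ Set.Icc 0 (μ i * Amax) := fun i =>
    ⟨mul_nonneg (hμ i).le (le_min (le_max_right _ _) hAmax.le),
      mul_le_mul_of_nonneg_left (min_le_right _ _) (hμ i).le⟩
  have hmin : ∀ a : Fin N → ℝ, (∀ i, a i ∈ Set.Icc 0 (μ i * Amax)) →
      z * ∑ i, μ i * min (max (-z) 0) Amax + 1 / 2 * ∑ i, (μ i * min (max (-z) 0) Amax) ^ 2 / μ i
        ≤ z * ∑ i, a i + 1 / 2 * ∑ i, a i ^ 2 / μ i := fun a ha => by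
    simp only [mul_sum, ← sum_add_distrib]
    exact sum_le_sum fun i _ => clamp_minimizes_quadratic (hμ i) (ha i).1 (ha i).2
  refine ⟨hmem, hmin, fun hzA => ?_⟩
  have hleast : IsLeast ((fun a : Fin N → ℝ => z * ∑ i, a i + 1 / 2 * ∑ i, a i ^ 2 / μ i) ''
      {a | ∀ i, a i ∈ Set.Icc 0 (μ i * Amax)}) _ :=
    ⟨⟨_, hmem, rfl⟩, Set.forall_mem_image.2 hmin⟩
  beta_reduce
  rw [hleast.csInf_eq, min_eq_left hzA]
  have hsq : ∀ i, (μ i * max (-z) 0) ^ 2 / μ i = μ i * max (-z) 0 ^ 2 := fun i => by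
    field_simp [(hμ i).ne']
  simp only [hsq, ← sum_mul, mul_left_comm z, mul_max_neg_zero]
  ring

/-- The infimum of `a ↦ z·∑ aᵢ + c₁(a)` over the box `A` is attained at
`â(z)` with `âᵢ(z) = μᵢ · min(z⁻, A_max)`, and if `z⁻ ≤ A_max` then
`H_m(z) = (1/2) μ̄ (z⁻)²`. -/
theorem first_best_drift_hamiltonian
    (N : ℕ) (hN : 1 ≤ N) (μ : Fin N → ℝ) (hμ : ∀ i, 0 < μ i)
    (Amax : ℝ) (hAmax : 0 < Amax)
    (A : Set (Fin N → ℝ)) (hA : A = {a | ∀ i, a i ∈ Set.Icc 0 (μ i * Amax)})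
    (c₁ : (Fin N → ℝ) → ℝ) (hc₁ : c₁ = fun a => (1 / 2) * ∑ i, (a i) ^ 2 / μ i)
    (μbar : ℝ) (hμbar : μbar = ∑ i, μ i)
    (Hm : ℝ → ℝ)
    (hHm : Hm = fun z => - sInf ((fun a => z * (∑ i, a i) + c₁ a) '' A))
    (z : ℝ) (ahat : Fin N → ℝ)
    (hahat : ahat = fun i => μ i * min (max (-z) 0) Amax) :
    ahat ∈ A ∧
      (∀ a ∈ A, z * (∑ i, ahat i) + c₁ ahat ≤ z * (∑ i, a i) + c₁ a) ∧
      (max (-z) 0 ≤ Amax → Hm z = (1 / 2) * μbar * (max (-z) 0) ^ 2) :=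
  first_best_drift_hamiltonian_general N μ hμ Amax hAmax A hA c₁ hc₁ μbar hμbar Hm hHm z ahat hahat
end

section
/- For every γ ∈ ℝ, the infimum of the function b ↦ c₂(b) − γ |σ(b)|² over B is attained at the point b̂(γ); consequently H_v(γ) = −(1/2)( c₂(b̂(γ)) − γ |σ(b̂(γ))|² ). -/
/-! Writing `q_j = σ_j²`, the objective is separable:
`c₂(b) − γ|σ(b)|² = ∑ⱼ q_j/λ_j (1/b_j − 1) − γ q_j b_j`, so it suffices to minimise each summand
over `[ε, 1]`. For `γ ≥ 0` each summand is decreasing, hence minimal at `1`. For `γ < 0` the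
summand is, up to the factor `q_j/λ_j ≥ 0` and a constant, `t ↦ 1/t + κ t` with `κ = λ_j(−γ)`,
a convex function with unconstrained minimiser `κ^(-1/2)`; its minimiser on `[ε, 1]` is the
projection of `κ^(-1/2)` onto the interval. -/

open Set

theorem isMinOn_inv_add_mul_max_min {κ r a b : ℝ} (hκ : 0 < κ) (hr0 : 0 ≤ r)
    (hr : κ * r ^ 2 = 1) (ha : 0 < a) (hab : a ≤ b) :
    IsMinOn (fun t => t⁻¹ + κ * t) (Icc a b) (max a (min b r)) := by
  refine isMinOn_iff.2 fun t ⟨hat, htb⟩ => ?_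
  set s := max a (min b r)
  have hs : 0 < s := ha.trans_le (le_max_left _ _)
  have ht : 0 < t := ha.trans_le hat
  -- `t⁻¹ + κ t - (s⁻¹ + κ s) = (t - s)(κ t s - 1) / (t s)`, and both factors have the same sign
  have hsign : 0 ≤ (t - s) * (κ * t * s - 1) := by
    rcases le_total r a with hra | har
    · have hsa : s = a := by simp [s, min_eq_right (hra.trans hab), hra]
      rw [hsa]
      have : κ * r ^ 2 ≤ κ * (t * a) := by gcongr; nlinarith
      nlinarith
    rcases le_total b r with hbr | hrb
    · have hsb : s = b := by simp [s, hbr, hab]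
      rw [hsb]
      have : κ * (t * b) ≤ κ * r ^ 2 := by gcongr; nlinarith
      nlinarith
    · have hsr : s = r := by simp [s, hrb, har]
      rw [hsr]
      have : (t - r) * (κ * t * r - 1) = κ * r * (t - r) ^ 2 := by linear_combination (t - r) * hr
      rw [this]
      positivity
  have hdiff : t⁻¹ + κ * t - (s⁻¹ + κ * s) = (t - s) * (κ * t * s - 1) / (t * s) := by
    field_simp
    ring
  have := div_nonneg hsign (mul_pos ht hs).le
  linarith

theorem mul_rpow_neg_half_sq {κ : ℝ} (hκ : 0 < κ) : κ * (κ ^ (-(1 : ℝ) / 2)) ^ 2 = 1 := by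
  rw [← Real.rpow_natCast, ← Real.rpow_mul hκ.le]
  norm_num [Real.rpow_neg_one, hκ.ne']

theorem max_min_mem_Icc {a b : ℝ} (hab : a ≤ b) (x : ℝ) : max a (min b x) ∈ Icc a b :=
  (projIcc a b hab x).2

theorem isMinOn_coordinate_cost {q l ε γ s : ℝ} (hq : 0 ≤ q) (hl : 0 < l) (hε : 0 < ε)
    (hε1 : ε ≤ 1) (hs : s = if γ < 0 then max ε (min 1 ((l * max (-γ) 0) ^ (-(1 : ℝ) / 2))) else 1) :
    IsMinOn (fun t => q / l * (1 / t - 1) - γ * (q * t)) (Icc ε 1) s := by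
  refine isMinOn_iff.2 fun t ht => ?_
  split_ifs at hs with hγ <;> subst hs
  · have hκ : 0 < l * max (-γ) 0 := mul_pos hl (lt_max_of_lt_left (neg_pos.2 hγ))
    have hmin := isMinOn_inv_add_mul_max_min hκ (by positivity) (mul_rpow_neg_half_sq hκ) hε hε1
    have hrw : ∀ u, q / l * (1 / u - 1) - γ * (q * u)
        = q / l * (u⁻¹ + l * max (-γ) 0 * u) - q / l := by
      intro u
      rw [max_eq_left (neg_nonneg.2 hγ.le)]
      linear_combination γ * q * u * mul_inv_cancel₀ hl.ne'
    rw [hrw, hrw]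
    exact sub_le_sub_right (mul_le_mul_of_nonneg_left (isMinOn_iff.1 hmin t ht) (by positivity)) _
  · have ht0 : 0 < t := hε.trans_le ht.1
    have hinv : 0 ≤ q / l * (1 / t - 1) :=
      mul_nonneg (div_nonneg hq hl.le) (sub_nonneg.2 (one_le_one_div ht0 ht.2))
    have hlin : γ * (q * t) ≤ γ * (q * 1) := by
      gcongr
      exacts [not_lt.1 hγ, ht.2]
    simp only [div_one, sub_self, mul_zero]
    linarith

theorem volatility_hamiltonian_attained_general
    (d : ℕ) (σ lam : Fin d → ℝ)
    (hlam : ∀ j, 0 < lam j)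
    (ε : ℝ) (hε : ε ∈ Set.Ioo (0 : ℝ) 1)
    (B : Set (Fin d → ℝ)) (hB : B = {b | ∀ j, b j ∈ Set.Icc ε 1})
    (c₂ : (Fin d → ℝ) → ℝ)
    (hc₂ : c₂ = fun b => ∑ j, (σ j) ^ 2 / lam j * (1 / b j - 1))
    (σsq : (Fin d → ℝ) → ℝ) (hσsq : σsq = fun b => ∑ j, (σ j) ^ 2 * b j)
    (Hv : ℝ → ℝ)
    (hHv : Hv = fun γ => -(1 / 2) * sInf ((fun b => c₂ b - γ * σsq b) '' B))
    (γ : ℝ) (bhat : Fin d → ℝ)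
    (hbhat : bhat = fun j =>
      if γ < 0 then max ε (min 1 ((lam j * max (-γ) 0) ^ (-(1 : ℝ) / 2))) else 1) :
    bhat ∈ B ∧
      (∀ b ∈ B, c₂ bhat - γ * σsq bhat ≤ c₂ b - γ * σsq b) ∧
      Hv γ = -(1 / 2) * (c₂ bhat - γ * σsq bhat) := by
  obtain ⟨hε0, hε1⟩ := hε
  have hmem : bhat ∈ B := by
    subst hB hbhat
    intro j
    split_ifs
    exacts [max_min_mem_Icc hε1.le _, right_mem_Icc.2 hε1.le]
  have hmin : ∀ b ∈ B, c₂ bhat - γ * σsq bhat ≤ c₂ b - γ * σsq b := by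
    intro b hb
    subst hB hc₂ hσsq
    simp only [Finset.mul_sum, ← Finset.sum_sub_distrib]
    exact Finset.sum_le_sum fun j _ => isMinOn_coordinate_cost (sq_nonneg _) (hlam j) hε0 hε1.le
      (congrFun hbhat j) (hb j)
  refine ⟨hmem, hmin, ?_⟩
  subst hHv
  exact congrArg _ (IsLeast.csInf_eq ⟨⟨bhat, hmem, rfl⟩, by rintro _ ⟨b, hb, rfl⟩; exact hmin b hb⟩)

/-- The infimum of `b ↦ c₂(b) − γ|σ(b)|²` over `B` is attained at `b̂(γ)`,
and consequently `H_v(γ) = −(1/2)(c₂(b̂(γ)) − γ|σ(b̂(γ))|²)`. -/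
theorem volatility_hamiltonian_attained
    (d : ℕ) (hd : 1 ≤ d) (σ lam : Fin d → ℝ)
    (hσ : ∀ j, 0 < σ j) (hlam : ∀ j, 0 < lam j)
    (ε : ℝ) (hε : ε ∈ Set.Ioo (0 : ℝ) 1)
    (B : Set (Fin d → ℝ)) (hB : B = {b | ∀ j, b j ∈ Set.Icc ε 1})
    (c₂ : (Fin d → ℝ) → ℝ)
    (hc₂ : c₂ = fun b => ∑ j, (σ j) ^ 2 / lam j * (1 / b j - 1))
    (σsq : (Fin d → ℝ) → ℝ) (hσsq : σsq = fun b => ∑ j, (σ j) ^ 2 * b j)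
    (Hv : ℝ → ℝ)
    (hHv : Hv = fun γ => -(1 / 2) * sInf ((fun b => c₂ b - γ * σsq b) '' B))
    (γ : ℝ) (bhat : Fin d → ℝ)
    (hbhat : bhat = fun j =>
      if γ < 0 then max ε (min 1 ((lam j * max (-γ) 0) ^ (-(1 : ℝ) / 2))) else 1) :
    bhat ∈ B ∧
      (∀ b ∈ B, c₂ bhat - γ * σsq bhat ≤ c₂ b - γ * σsq b) ∧
      Hv γ = -(1 / 2) * (c₂ bhat - γ * σsq bhat) :=
  volatility_hamiltonian_attained_general d σ lam hlam ε hε B hB c₂ hc₂ σsq hσsq Hv hHv γ bhat hbhat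
end

section
/- For every q ≥ 0 one has −2 H_v(−q) = F₀(q). Moreover, the function F₀ is continuous and nondecreasing on [0, ∞). -/
/-!
For every real `x`, `φ(x) = min_{b ∈ [ε, 1]} (1/b - 1 + x b)`, the minimiser being `x^{-1/2}`
clipped to `[ε, 1]`. The objective `c₂(b) + q |σ(b)|²` is the sum over `j` of
`(σ_j² / λ_j) (1/b_j - 1 + λ_j q b_j)`, the `j`-th term depending only on the `j`-th coordinate of
the box `B`, so its infimum is the sum of the coordinatewise minima, i.e. `F₀(q)`. As a pointwise
minimum of affine functions of `x` with slopes `b ∈ [0, 1]`, `φ` is nondecreasing and 1-Lipschitz,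
and hence `F₀` is continuous and nondecreasing.
-/

open Set

noncomputable def phi (ε x : ℝ) : ℝ :=
  if x ≤ 1 then x else if x < (ε ^ 2)⁻¹ then 2 * √x - 1 else ε * x + ε⁻¹ - 1

lemma phi_eq_ite {ε : ℝ} (hε : 0 < ε) (x : ℝ) :
    phi ε x = if x ≤ 1 then x else if 1 ≤ ε ^ 2 * x then ε * x + ε⁻¹ - 1 else 2 * √x - 1 := by
  simp only [phi, ← not_le, inv_le_iff_one_le_mul₀' (pow_pos hε 2), ite_not]

lemma phi_le {ε b : ℝ} (hε : 0 < ε) (hb : b ∈ Icc ε 1) (x : ℝ) :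
    phi ε x ≤ 1 / b - 1 + x * b := by
  obtain ⟨hεb, hb1⟩ := hb
  have hb0 : 0 < b := hε.trans_le hεb
  rw [phi_eq_ite hε]
  split_ifs with hx1 hxε
  · have hxb : x * b ≤ 1 := by nlinarith
    have : 1 / b - 1 + x * b - x = (1 - b) * (1 - x * b) / b := by field_simp; ring
    linarith [div_nonneg (mul_nonneg (sub_nonneg.2 hb1) (sub_nonneg.2 hxb)) hb0.le]
  · have hxbε : 1 ≤ x * b * ε := by nlinarith
    have : 1 / b - 1 + x * b - (ε * x + ε⁻¹ - 1) = (b - ε) * (x * b * ε - 1) / (b * ε) := by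
      field_simp; ring
    linarith [div_nonneg (mul_nonneg (sub_nonneg.2 hεb) (sub_nonneg.2 hxbε)) (mul_pos hb0 hε).le]
  · have : 1 / b - 1 + x * b - (2 * √x - 1) = (1 - √x * b) ^ 2 / b := by
      field_simp; linear_combination (-b ^ 2) * Real.sq_sqrt (show 0 ≤ x by linarith)
    linarith [div_nonneg (sq_nonneg (1 - √x * b)) hb0.le]

lemma exists_phi_eq {ε : ℝ} (hε : 0 < ε) (hε1 : ε ≤ 1) (x : ℝ) :
    ∃ b ∈ Icc ε 1, 1 / b - 1 + x * b = phi ε x := by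
  rw [phi_eq_ite hε]
  split_ifs with hx1 hxε
  · exact ⟨1, ⟨hε1, le_rfl⟩, by ring⟩
  · exact ⟨ε, ⟨le_rfl, hε1⟩, by ring⟩
  · have hx : √x ^ 2 = x := Real.sq_sqrt (by linarith)
    have hs : 1 < √x := Real.lt_sqrt_of_sq_lt (by linarith)
    have hsε : ε * √x ≤ 1 := by nlinarith
    refine ⟨(√x)⁻¹, ⟨?_, inv_le_one_of_one_le₀ hs.le⟩, ?_⟩
    · rwa [le_inv_comm₀ hε (by positivity), inv_eq_one_div, le_div_iff₀ hε, mul_comm]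
    · field_simp; linear_combination -hx

lemma isLeast_phi {ε : ℝ} (hε : 0 < ε) (hε1 : ε ≤ 1) (x : ℝ) :
    IsLeast ((fun b => 1 / b - 1 + x * b) '' Icc ε 1) (phi ε x) :=
  ⟨exists_phi_eq hε hε1 x, by rintro _ ⟨b, hb, rfl⟩; exact phi_le hε hb x⟩

lemma phi_monotone {ε : ℝ} (hε : 0 < ε) (hε1 : ε ≤ 1) : Monotone (phi ε) := by
  intro x y hxy
  obtain ⟨b, hb, hby⟩ := exists_phi_eq hε hε1 y
  calc phi ε x ≤ 1 / b - 1 + x * b := phi_le hε hb x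
    _ ≤ 1 / b - 1 + y * b := by gcongr; linarith [hb.1]
    _ = phi ε y := hby

lemma phi_lipschitzWith {ε : ℝ} (hε : 0 < ε) (hε1 : ε ≤ 1) : LipschitzWith 1 (phi ε) := by
  refine LipschitzWith.of_le_add fun x y => ?_
  obtain ⟨b, hb, hby⟩ := exists_phi_eq hε hε1 y
  have hb0 : 0 ≤ b := hε.le.trans hb.1
  calc phi ε x ≤ 1 / b - 1 + x * b := phi_le hε hb x
    _ = phi ε y + (x - y) * b := by rw [← hby]; ring
    _ ≤ phi ε y + |x - y| * 1 := by gcongr; exacts [le_abs_self _, hb.2]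
    _ = phi ε y + dist x y := by rw [mul_one, Real.dist_eq]

theorem isLeast_image_sum_pi {ι : Type*} {α : ι → Type*} {M : Type*} [Fintype ι]
    [AddCommMonoid M] [PartialOrder M] [IsOrderedAddMonoid M] {S : ∀ i, Set (α i)}
    {f : ∀ i, α i → M} {m : ι → M} (h : ∀ i, IsLeast (f i '' S i) (m i)) :
    IsLeast ((fun b => ∑ i, f i (b i)) '' univ.pi S) (∑ i, m i) := by
  choose b hb hbm using fun i => (h i).1
  refine ⟨⟨b, fun i _ => hb i, by simp only [hbm]⟩, ?_⟩
  rintro _ ⟨c, hc, rfl⟩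
  exact Finset.sum_le_sum fun i _ => (h i).2 ⟨c i, hc i trivial, rfl⟩

lemma isLeast_sum_phi {ι : Type*} [Fintype ι] {ε : ℝ} (hε : 0 < ε) (hε1 : ε ≤ 1)
    {w : ι → ℝ} (hw : ∀ j, 0 ≤ w j) (x : ι → ℝ) :
    IsLeast ((fun b => ∑ j, w j * (1 / b j - 1 + x j * b j)) '' univ.pi fun _ => Icc ε 1)
      (∑ j, w j * phi ε (x j)) :=
  isLeast_image_sum_pi fun j => by
    simpa only [image_image, id] using
      (monotone_id.const_mul (hw j)).map_isLeast (isLeast_phi hε hε1 (x j))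

theorem F0_eq_neg_two_Hv_and_monotone_general
    (d : ℕ) (σ lam : Fin d → ℝ)
    (hlam : ∀ j, 0 < lam j)
    (ε : ℝ) (hε : ε ∈ Set.Ioo (0 : ℝ) 1)
    (B : Set (Fin d → ℝ)) (hB : B = {b | ∀ j, b j ∈ Set.Icc ε 1})
    (c₂ : (Fin d → ℝ) → ℝ)
    (hc₂ : c₂ = fun b => ∑ j, (σ j) ^ 2 / lam j * (1 / b j - 1))
    (σsq : (Fin d → ℝ) → ℝ) (hσsq : σsq = fun b => ∑ j, (σ j) ^ 2 * b j)
    (Hv : ℝ → ℝ)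
    (hHv : Hv = fun γ => -(1 / 2) * sInf ((fun b => c₂ b - γ * σsq b) '' B))
    (φ : ℝ → ℝ)
    (hφ : φ = fun x =>
      if x ≤ 1 then x else if x < (ε ^ 2)⁻¹ then 2 * Real.sqrt x - 1 else ε * x + ε⁻¹ - 1)
    (F₀ : ℝ → ℝ) (hF₀ : F₀ = fun q => ∑ j, (σ j) ^ 2 / lam j * φ (lam j * q)) :
    (∀ q, 0 ≤ q → -2 * Hv (-q) = F₀ q) ∧
      ContinuousOn F₀ (Set.Ici 0) ∧ MonotoneOn F₀ (Set.Ici 0) := by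
  obtain ⟨hε0, hε1⟩ := hε
  have hφ_eq : φ = phi ε := hφ
  have hcoef : ∀ j, 0 ≤ σ j ^ 2 / lam j := fun j => div_nonneg (sq_nonneg _) (hlam j).le
  subst hφ_eq hF₀ hB hc₂ hσsq hHv
  refine ⟨fun q _ => ?_, ?_, ?_⟩
  · have hbox : {b : Fin d → ℝ | ∀ j, b j ∈ Icc ε 1} = univ.pi fun _ => Icc ε 1 := by
      ext; simp only [mem_ofPred_eq, mem_univ_pi]
    have hobj : ∀ b : Fin d → ℝ,
        (∑ j, σ j ^ 2 / lam j * (1 / b j - 1)) - -q * ∑ j, σ j ^ 2 * b j =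
          ∑ j, σ j ^ 2 / lam j * (1 / b j - 1 + lam j * q * b j) := fun b => by
      simp only [Finset.mul_sum, ← Finset.sum_sub_distrib]
      refine Finset.sum_congr rfl fun j _ => ?_
      field_simp [(hlam j).ne']
      ring
    simp only [hbox, hobj, (isLeast_sum_phi hε0 hε1.le hcoef (lam · * q)).csInf_eq]
    ring
  · exact (continuous_finsetSum _ fun j _ => continuous_const.mul
      ((phi_lipschitzWith hε0 hε1.le).continuous.comp (continuous_const_mul _))).continuousOn
  · refine Monotone.monotoneOn (fun x y hxy => Finset.sum_le_sum fun j _ => ?_) _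
    exact mul_le_mul_of_nonneg_left
      (phi_monotone hε0 hε1.le (mul_le_mul_of_nonneg_left hxy (hlam j).le)) (hcoef j)

/-- For every `q ≥ 0`, `−2 H_v(−q) = F₀(q)`; moreover `F₀` is continuous and
nondecreasing on `[0, ∞)`. -/
theorem F0_eq_neg_two_Hv_and_monotone
    (d : ℕ) (hd : 1 ≤ d) (σ lam : Fin d → ℝ)
    (hσ : ∀ j, 0 < σ j) (hlam : ∀ j, 0 < lam j)
    (ε : ℝ) (hε : ε ∈ Set.Ioo (0 : ℝ) 1)
    (B : Set (Fin d → ℝ)) (hB : B = {b | ∀ j, b j ∈ Set.Icc ε 1})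
    (c₂ : (Fin d → ℝ) → ℝ)
    (hc₂ : c₂ = fun b => ∑ j, (σ j) ^ 2 / lam j * (1 / b j - 1))
    (σsq : (Fin d → ℝ) → ℝ) (hσsq : σsq = fun b => ∑ j, (σ j) ^ 2 * b j)
    (Hv : ℝ → ℝ)
    (hHv : Hv = fun γ => -(1 / 2) * sInf ((fun b => c₂ b - γ * σsq b) '' B))
    (φ : ℝ → ℝ)
    (hφ : φ = fun x =>
      if x ≤ 1 then x else if x < (ε ^ 2)⁻¹ then 2 * Real.sqrt x - 1 else ε * x + ε⁻¹ - 1)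
    (F₀ : ℝ → ℝ) (hF₀ : F₀ = fun q => ∑ j, (σ j) ^ 2 / lam j * φ (lam j * q)) :
    (∀ q, 0 ≤ q → -2 * Hv (-q) = F₀ q) ∧
      ContinuousOn F₀ (Set.Ici 0) ∧ MonotoneOn F₀ (Set.Ici 0) :=
  F0_eq_neg_two_Hv_and_monotone_general d σ lam hlam ε hε B hB c₂ hc₂ σsq hσsq Hv hHv φ hφ F₀ hF₀
end

section
/- Define f₀(q, γ) := q |σ(b̂(γ))|² + c₂(b̂(γ)). For every q ≥ 0, the infimum of γ ↦ f₀(q, γ) over γ ∈ (−∞, 0] is attained at γ = −q, and inf_{γ ≤ 0} f₀(q, γ) = f₀(q, −q) = −2 H_v(−q). -/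
/-!
Writing `t = (λ_j q)^{-1/2}`, the objective `q |σ(b)|² + c₂(b)` splits into the coordinate costs
`q σ_j² (b_j + t²/b_j) - σ_j²/λ_j`. The map `x ↦ x + t²/x` decreases up to `t` and increases
after it, so on `[ε, 1]` it is minimised at the clamp of `t`, which is `b̂_j(-q)`. Hence `b̂(-q)`
minimises the objective over all of `B`, which contains every `b̂(γ)`; this gives both the
minimality in `γ` and the identification with `-2 H_v(-q)`.
-/

open Set

lemma IsMinOn.isLeast_image {α β : Type*} [Preorder β] {f : α → β} {s : Set α} {a : α}
    (hf : IsMinOn f s a) (ha : a ∈ s) : IsLeast (f '' s) (f a) :=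
  ⟨mem_image_of_mem f ha, forall_mem_image.2 hf⟩

lemma isMinOn_sum_univ_pi {ι M : Type*} [Fintype ι] {α : ι → Type*} [AddCommMonoid M]
    [PartialOrder M] [IsOrderedAddMonoid M] {f : ∀ i, α i → M} {s : ∀ i, Set (α i)}
    {x : ∀ i, α i} (hx : ∀ i, IsMinOn (f i) (s i) (x i)) :
    IsMinOn (fun b => ∑ i, f i (b i)) (univ.pi s) x := fun _ hb =>
  Finset.sum_le_sum fun i _ => hx i (hb i (mem_univ i))

section Clamp

variable {ε t b : ℝ}

lemma clamp_add_sq_div_le (hε : 0 < ε) (hε1 : ε ≤ 1) (ht : 0 < t) (hb : b ∈ Icc ε 1) :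
    max ε (min 1 t) + t ^ 2 / max ε (min 1 t) ≤ b + t ^ 2 / b := by
  set m := max ε (min 1 t)
  have hm : 0 < m := hε.trans_le (le_max_left _ _)
  have hb0 : 0 < b := hε.trans_le hb.1
  have key : 0 ≤ (b - m) * (b * m - t ^ 2) := by
    rcases le_total t ε with htε | hεt
    · have : m = ε := by simp [m, htε, htε.trans hε1]
      rw [this]
      exact mul_nonneg (by linarith [hb.1]) (by nlinarith [hb.1])
    rcases le_total 1 t with h1t | ht1
    · have : m = 1 := by simp [m, h1t, hε1]
      rw [this]
      exact mul_nonneg_of_nonpos_of_nonpos (by linarith [hb.2]) (by nlinarith [hb.2])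
    · have : m = t := by simp [m, ht1, hεt]
      rw [this]
      nlinarith [mul_nonneg ht.le (sq_nonneg (b - t))]
  have expand : b + t ^ 2 / b - (m + t ^ 2 / m) = (b - m) * (b * m - t ^ 2) / (b * m) := by
    field_simp
    ring
  linarith [div_nonneg key (mul_pos hb0 hm).le]

end Clamp

/-- The coordinate `b̂_j(γ)`, for `λ_j = l`. -/
noncomputable def clampedOptimum (ε l γ : ℝ) : ℝ :=
  if γ < 0 then max ε (min 1 ((l * max (-γ) 0) ^ (-(1 : ℝ) / 2))) else 1

section ClampedOptimum

variable {ε l γ q : ℝ}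

lemma clampedOptimum_mem_Icc (hε1 : ε ≤ 1) : clampedOptimum ε l γ ∈ Icc ε 1 := by
  unfold clampedOptimum
  split
  · exact ⟨le_max_left _ _, max_le hε1 (min_le_left _ _)⟩
  · exact ⟨hε1, le_rfl⟩

lemma rpow_neg_half_sq {x : ℝ} (hx : 0 < x) : (x ^ (-(1 : ℝ) / 2)) ^ 2 = x⁻¹ := by
  rw [← Real.rpow_mul_natCast hx.le]
  norm_num [Real.rpow_neg_one]

lemma isMinOn_clampedOptimum_neg {c : ℝ} (hc : 0 ≤ c) (hl : 0 < l) (hq : 0 ≤ q)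
    (hε : 0 < ε) (hε1 : ε ≤ 1) :
    IsMinOn (fun b => q * (c * b) + c / l * (1 / b - 1)) (Icc ε 1) (clampedOptimum ε l (-q)) := by
  refine isMinOn_iff.2 fun b hb => ?_
  have hb0 : 0 < b := hε.trans_le hb.1
  rcases hq.eq_or_lt with rfl | hq0
  · have : clampedOptimum ε l (-0) = 1 := by simp [clampedOptimum]
    simp only [this, zero_mul, zero_add, div_one, sub_self, mul_zero]
    exact mul_nonneg (div_nonneg hc hl.le) (by rw [sub_nonneg, le_div_iff₀ hb0]; linarith [hb.2])
  have hopt : clampedOptimum ε l (-q) = max ε (min 1 ((l * q) ^ (-(1 : ℝ) / 2))) := by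
    simp only [clampedOptimum, neg_lt_zero, hq0, if_true, neg_neg, max_eq_left hq]
  set t := (l * q) ^ (-(1 : ℝ) / 2)
  have ht : 0 < t := Real.rpow_pos_of_pos (mul_pos hl hq0) _
  have hm : 0 < max ε (min 1 t) := hε.trans_le (le_max_left _ _)
  have hcost : ∀ x ≠ 0, q * (c * x) + c / l * (1 / x - 1) = q * c * (x + t ^ 2 / x) - c / l := by
    intro x hx
    rw [rpow_neg_half_sq (mul_pos hl hq0)]
    field_simp
    ring
  rw [hopt, hcost _ hm.ne', hcost _ hb0.ne']
  exact sub_le_sub_right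
    (mul_le_mul_of_nonneg_left (clamp_add_sq_div_le hε hε1 ht hb) (mul_nonneg hq hc)) _

end ClampedOptimum

theorem volatility_cost_minimiser_general
    (d : ℕ) (σ lam : Fin d → ℝ)
    (hlam : ∀ j, 0 < lam j)
    (ε : ℝ) (hε : ε ∈ Set.Ioo (0 : ℝ) 1)
    (B : Set (Fin d → ℝ)) (hB : B = {b | ∀ j, b j ∈ Set.Icc ε 1})
    (c₂ : (Fin d → ℝ) → ℝ)
    (hc₂ : c₂ = fun b => ∑ j, (σ j) ^ 2 / lam j * (1 / b j - 1))
    (σsq : (Fin d → ℝ) → ℝ) (hσsq : σsq = fun b => ∑ j, (σ j) ^ 2 * b j)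
    (Hv : ℝ → ℝ)
    (hHv : Hv = fun γ => -(1 / 2) * sInf ((fun b => c₂ b - γ * σsq b) '' B))
    (bhat : ℝ → Fin d → ℝ)
    (hbhat : bhat = fun γ j =>
      if γ < 0 then max ε (min 1 ((lam j * max (-γ) 0) ^ (-(1 : ℝ) / 2))) else 1)
    (f₀ : ℝ → ℝ → ℝ) (hf₀ : f₀ = fun q γ => q * σsq (bhat γ) + c₂ (bhat γ))
    (q : ℝ) (hq : 0 ≤ q) :
    (∀ γ ≤ (0 : ℝ), f₀ q (-q) ≤ f₀ q γ) ∧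
      sInf (f₀ q '' Set.Iic 0) = f₀ q (-q) ∧
      f₀ q (-q) = -2 * Hv (-q) := by
  obtain ⟨hε0, hε1⟩ := hε
  let G : (Fin d → ℝ) → ℝ := fun b => q * σsq b + c₂ b
  have hB_pi : B = univ.pi fun _ => Icc ε 1 := by
    subst hB; ext b; exact ⟨fun h j _ => h j, fun h j => h j (mem_univ j)⟩
  have hbhat_mem : ∀ γ, bhat γ ∈ B := fun γ => by
    rw [hB_pi, hbhat]
    exact fun j _ => clampedOptimum_mem_Icc hε1.le
  have hG_min : IsMinOn G B (bhat (-q)) := by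
    have hG : G = fun b => ∑ j, (q * (σ j ^ 2 * b j) + σ j ^ 2 / lam j * (1 / b j - 1)) := by
      ext b; simp only [G, hσsq, hc₂, Finset.mul_sum, Finset.sum_add_distrib]
    rw [hG, hB_pi, hbhat]
    exact isMinOn_sum_univ_pi fun j =>
      isMinOn_clampedOptimum_neg (sq_nonneg _) (hlam j) hq hε0 hε1.le
  have hf₀_eq : ∀ γ, f₀ q γ = G (bhat γ) := fun γ => by rw [hf₀]
  have hf₀_min : ∀ γ ≤ (0 : ℝ), f₀ q (-q) ≤ f₀ q γ := fun γ _ => by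
    rw [hf₀_eq, hf₀_eq]; exact hG_min (hbhat_mem γ)
  refine ⟨hf₀_min, IsLeast.csInf_eq ⟨⟨-q, neg_nonpos.2 hq, rfl⟩, forall_mem_image.2 hf₀_min⟩, ?_⟩
  have hHv_arg : (fun b => c₂ b - (-q) * σsq b) = G := by ext b; simp only [G]; ring
  rw [hHv]
  beta_reduce
  rw [hHv_arg, (hG_min.isLeast_image (hbhat_mem _)).csInf_eq, hf₀_eq]
  ring

/-- With `f₀(q,γ) := q|σ(b̂(γ))|² + c₂(b̂(γ))`, for every `q ≥ 0` the infimum of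
`γ ↦ f₀(q,γ)` over `(−∞,0]` is attained at `γ = −q`, and
`inf_{γ ≤ 0} f₀(q,γ) = f₀(q,−q) = −2 H_v(−q)`. -/
theorem volatility_cost_minimiser
    (d : ℕ) (hd : 1 ≤ d) (σ lam : Fin d → ℝ)
    (hσ : ∀ j, 0 < σ j) (hlam : ∀ j, 0 < lam j)
    (ε : ℝ) (hε : ε ∈ Set.Ioo (0 : ℝ) 1)
    (B : Set (Fin d → ℝ)) (hB : B = {b | ∀ j, b j ∈ Set.Icc ε 1})
    (c₂ : (Fin d → ℝ) → ℝ)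
    (hc₂ : c₂ = fun b => ∑ j, (σ j) ^ 2 / lam j * (1 / b j - 1))
    (σsq : (Fin d → ℝ) → ℝ) (hσsq : σsq = fun b => ∑ j, (σ j) ^ 2 * b j)
    (Hv : ℝ → ℝ)
    (hHv : Hv = fun γ => -(1 / 2) * sInf ((fun b => c₂ b - γ * σsq b) '' B))
    (bhat : ℝ → Fin d → ℝ)
    (hbhat : bhat = fun γ j =>
      if γ < 0 then max ε (min 1 ((lam j * max (-γ) 0) ^ (-(1 : ℝ) / 2))) else 1)
    (f₀ : ℝ → ℝ → ℝ) (hf₀ : f₀ = fun q γ => q * σsq (bhat γ) + c₂ (bhat γ))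
    (q : ℝ) (hq : 0 ≤ q) :
    (∀ γ ≤ (0 : ℝ), f₀ q (-q) ≤ f₀ q γ) ∧
      sInf (f₀ q '' Set.Iic 0) = f₀ q (-q) ∧
      f₀ q (-q) = -2 * Hv (-q) :=
  volatility_cost_minimiser_general d σ lam hlam ε hε B hB c₂ hc₂ σsq hσsq Hv hHv bhat hbhat f₀ hf₀
    q hq
end

section
/- Let T > 0, κ ≥ 0 and r > 0. Define E : [0,T] × ℝ → ℝ by E(t,x) := κ(T−t) x + ∫_t^T H_v(−r κ² (T−s)²) ds. Then E(T, x) = 0 for all x ∈ ℝ; for each t ∈ [0,T] the map x ↦ E(t,x) is affine with ∂_x E(t,x) = κ(T−t) and ∂²_{xx} E(t,x) = 0; and for every (t,x) ∈ (0,T) × ℝ the partial derivative ∂_t E(t,x) exists and satisfies ∂_t E(t,x) + H_v( ∂²_{xx} E(t,x) − r (∂_x E(t,x))² ) + κ x = 0. In other words, E is a classical solution of the terminal-value HJB problem ∂_t E + H_v(E_{xx} − r E_x²) + κx = 0 on (0,T) × ℝ with E(T, ·) = 0. -/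
/-!
`H_v` is `-1/2` times an infimum of the affine maps `γ ↦ c₂ b - γ |σ(b)|²`, whose slopes
`|σ(b)|²` are bounded on `B` by `∑ σ_j²`; an infimum of uniformly Lipschitz maps is Lipschitz,
so `H_v` is continuous. The fundamental theorem of calculus then differentiates
`∫_t^T H_v(-rκ²(T-s)²) ds` in `t`, and the remaining terms of `E` are affine in `x`.
-/

open Set

section InfOfAffineFamily

variable {ι : Type*} {B : Set ι} {c s : ι → ℝ} {M : ℝ}

theorem bddBelow_image_sub_mul (hc : BddBelow (c '' B)) (hs : ∀ b ∈ B, |s b| ≤ M) (γ : ℝ) :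
    BddBelow ((fun b => c b - γ * s b) '' B) := by
  obtain ⟨m, hm⟩ := hc
  refine ⟨m - |γ| * M, forall_mem_image.2 fun b hb => ?_⟩
  have hcb : m ≤ c b := hm (mem_image_of_mem c hb)
  have hγs : γ * s b ≤ |γ| * M := calc
    γ * s b ≤ |γ| * |s b| := by rw [← abs_mul]; exact le_abs_self _
    _ ≤ |γ| * M := mul_le_mul_of_nonneg_left (hs b hb) (abs_nonneg γ)
  linarith

theorem lipschitzWith_sInf_image_sub_mul (hB : B.Nonempty) (hc : BddBelow (c '' B))
    (hs : ∀ b ∈ B, |s b| ≤ M) :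
    LipschitzWith M.toNNReal (fun γ => sInf ((fun b => c b - γ * s b) '' B)) := by
  refine LipschitzWith.of_le_add_mul' M fun γ₁ γ₂ => ?_
  rw [← sub_le_iff_le_add]
  refine le_csInf (hB.image _) (forall_mem_image.2 fun b hb => ?_)
  have hinf : sInf ((fun b => c b - γ₁ * s b) '' B) ≤ c b - γ₁ * s b :=
    csInf_le (bddBelow_image_sub_mul hc hs γ₁) (mem_image_of_mem _ hb)
  have hslope : (γ₂ - γ₁) * s b ≤ M * dist γ₁ γ₂ := calc
    (γ₂ - γ₁) * s b ≤ |γ₂ - γ₁| * |s b| := by rw [← abs_mul]; exact le_abs_self _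
    _ ≤ dist γ₁ γ₂ * M := by
      rw [Real.dist_eq, abs_sub_comm]
      exact mul_le_mul_of_nonneg_left (hs b hb) (abs_nonneg _)
    _ = M * dist γ₁ γ₂ := mul_comm _ _
  linarith

end InfOfAffineFamily

section WeightedSums

variable {ι : Type*} [Fintype ι] {b : ι → ℝ}

theorem sum_mul_one_div_sub_one_nonneg {w : ι → ℝ} (hw : ∀ j, 0 ≤ w j)
    (hb : ∀ j, b j ∈ Ioc 0 1) : 0 ≤ ∑ j, w j * (1 / b j - 1) :=
  Finset.sum_nonneg fun j _ =>
    mul_nonneg (hw j) (sub_nonneg.2 (one_le_one_div (hb j).1 (hb j).2))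

theorem abs_sum_sq_mul_le_sum_sq (σ : ι → ℝ) (hb : ∀ j, b j ∈ Icc 0 1) :
    |∑ j, σ j ^ 2 * b j| ≤ ∑ j, σ j ^ 2 := by
  rw [abs_of_nonneg (Finset.sum_nonneg fun j _ => mul_nonneg (sq_nonneg _) (hb j).1)]
  exact Finset.sum_le_sum fun j _ => mul_le_of_le_one_right (sq_nonneg _) (hb j).2

end WeightedSums

theorem hasDerivAt_mul_sub_mul_add_integral {g : ℝ → ℝ} (hg : Continuous g) (a T x t : ℝ) :
    HasDerivAt (fun s => a * (T - s) * x + ∫ u in s..T, g u) (-(g t + a * x)) t := by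
  have hlin : HasDerivAt (fun s => a * (T - s) * x) (-(a * x)) t := by
    simpa using (((hasDerivAt_id t).const_sub T).const_mul a).mul_const x
  have hint : HasDerivAt (fun s => ∫ u in s..T, g u) (-g t) t :=
    intervalIntegral.integral_hasDerivAt_left (hg.intervalIntegrable _ _)
      (hg.stronglyMeasurableAtFilter _ _) hg.continuousAt
  exact (hlin.add hint).congr_deriv (by ring)

theorem consumer_certainty_equivalent_HJB_general
    (d : ℕ) (σ lam : Fin d → ℝ)
    (hlam : ∀ j, 0 < lam j)
    (ε : ℝ) (hε : ε ∈ Set.Ioo (0 : ℝ) 1)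
    (B : Set (Fin d → ℝ)) (hB : B = {b | ∀ j, b j ∈ Set.Icc ε 1})
    (c₂ : (Fin d → ℝ) → ℝ)
    (hc₂ : c₂ = fun b => ∑ j, (σ j) ^ 2 / lam j * (1 / b j - 1))
    (σsq : (Fin d → ℝ) → ℝ) (hσsq : σsq = fun b => ∑ j, (σ j) ^ 2 * b j)
    (Hv : ℝ → ℝ)
    (hHv : Hv = fun γ => -(1 / 2) * sInf ((fun b => c₂ b - γ * σsq b) '' B))
    (T κ r : ℝ)
    (E : ℝ → ℝ → ℝ)
    (hE : E = fun t x => κ * (T - t) * x + ∫ s in t..T, Hv (-(r * κ ^ 2 * (T - s) ^ 2))) :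
    (∀ x, E T x = 0) ∧
      (∀ t x, HasDerivAt (E t) (κ * (T - t)) x) ∧
      (∀ t x, HasDerivAt (deriv (E t)) 0 x) ∧
      (∀ t ∈ Set.Ioo (0 : ℝ) T, ∀ x : ℝ,
        HasDerivAt (fun s => E s x)
          (-(Hv ((0 : ℝ) - r * (κ * (T - t)) ^ 2) + κ * x)) t) := by
  subst hB hc₂ hσsq hE
  have hB_mem : ∀ b ∈ {b : Fin d → ℝ | ∀ j, b j ∈ Icc ε 1}, ∀ j, b j ∈ Ioc 0 1 :=
    fun b hb j => ⟨hε.1.trans_le (hb j).1, (hb j).2⟩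
  have hHv_cont : Continuous Hv := by
    subst hHv
    refine continuous_const.mul (LipschitzWith.continuous
      (lipschitzWith_sInf_image_sub_mul (M := ∑ j, σ j ^ 2) ⟨1, fun j => ?_⟩ ?_ ?_))
    · exact ⟨hε.2.le, le_rfl⟩
    · refine ⟨0, forall_mem_image.2 fun b hb => ?_⟩
      exact sum_mul_one_div_sub_one_nonneg (fun j => div_nonneg (sq_nonneg _) (hlam j).le)
        (hB_mem b hb)
    · exact fun b hb =>
        abs_sum_sq_mul_le_sum_sq σ fun j => Ioc_subset_Icc_self (hB_mem b hb j)
  have hE_x : ∀ t x, HasDerivAt (fun x => κ * (T - t) * x +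
      ∫ s in t..T, Hv (-(r * κ ^ 2 * (T - s) ^ 2))) (κ * (T - t)) x := fun t x => by
    simpa only [mul_one] using ((hasDerivAt_id' x).const_mul (κ * (T - t))).add_const _
  refine ⟨fun x => by simp, hE_x, fun t x => ?_, fun t _ x => ?_⟩
  · rw [funext fun x => (hE_x t x).deriv]
    exact hasDerivAt_const x _
  · have harg : (0 : ℝ) - r * (κ * (T - t)) ^ 2 = -(r * κ ^ 2 * (T - t) ^ 2) := by ring
    rw [harg]
    exact hasDerivAt_mul_sub_mul_add_integral (hHv_cont.comp (by fun_prop)) κ T x t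

/-- `E(t,x) = κ(T−t)x + ∫_t^T H_v(−rκ²(T−s)²) ds` is a classical solution of the
terminal-value HJB problem `∂_t E + H_v(E_xx − r E_x²) + κx = 0` on `(0,T) × ℝ`, `E(T,·) = 0`,
with `E_x(t,x) = κ(T−t)` and `E_xx = 0`. -/
theorem consumer_certainty_equivalent_HJB
    (d : ℕ) (hd : 1 ≤ d) (σ lam : Fin d → ℝ)
    (hσ : ∀ j, 0 < σ j) (hlam : ∀ j, 0 < lam j)
    (ε : ℝ) (hε : ε ∈ Set.Ioo (0 : ℝ) 1)
    (B : Set (Fin d → ℝ)) (hB : B = {b | ∀ j, b j ∈ Set.Icc ε 1})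
    (c₂ : (Fin d → ℝ) → ℝ)
    (hc₂ : c₂ = fun b => ∑ j, (σ j) ^ 2 / lam j * (1 / b j - 1))
    (σsq : (Fin d → ℝ) → ℝ) (hσsq : σsq = fun b => ∑ j, (σ j) ^ 2 * b j)
    (Hv : ℝ → ℝ)
    (hHv : Hv = fun γ => -(1 / 2) * sInf ((fun b => c₂ b - γ * σsq b) '' B))
    (T κ r : ℝ) (hT : 0 < T) (hκ : 0 ≤ κ) (hr : 0 < r)
    (E : ℝ → ℝ → ℝ)
    (hE : E = fun t x => κ * (T - t) * x + ∫ s in t..T, Hv (-(r * κ ^ 2 * (T - s) ^ 2))) :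
    (∀ x, E T x = 0) ∧
      (∀ t x, HasDerivAt (E t) (κ * (T - t)) x) ∧
      (∀ t x, HasDerivAt (deriv (E t)) 0 x) ∧
      (∀ t ∈ Set.Ioo (0 : ℝ) T, ∀ x : ℝ,
        HasDerivAt (fun s => E s x)
          (-(Hv ((0 : ℝ) - r * (κ * (T - t)) ^ 2) + κ * x)) t) :=
  consumer_certainty_equivalent_HJB_general d σ lam hlam ε hε B hB c₂ hc₂ σsq hσsq Hv hHv T κ r E hE
end

section
/- Let T > 0, κ ≥ 0, r > 0, λ̄ := max_{1 ≤ j ≤ d} λ_j and s := ∑_{j=1}^d σ_j². If r κ² T² ≤ 1/λ̄, then H_v(−r κ² (T−t)²) = −(1/2) r κ² s (T−t)² for every t ∈ [0,T], and consequently ∫_0^T H_v(−r κ² (T−t)²) dt = −r κ² s T³ / 6. -/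
/-!
For `b ∈ [ε,1]^d` the objective `c₂(b) − γ|σ(b)|²` exceeds its value `−γ s` at `b = 1` by
`∑ⱼ σⱼ² (1 − bⱼ)(1 + γ λⱼ bⱼ) / (λⱼ bⱼ)`, which is nonnegative as soon as `γ λⱼ ≥ −1` for all `j`.
So in that regime no effort is exerted and `H_v(γ) = γ s / 2`. For `γ = −rκ²(T−t)²` the condition
is `rκ²(T−t)² λ̄ ≤ 1`, implied by `rκ²T² ≤ 1/λ̄`, and it remains to integrate `(T−t)²`.
-/

lemma neg_mul_le_div_mul_sub_mul {γ l x v : ℝ} (hl : 0 < l) (hx : x ∈ Set.Ioc 0 1)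
    (hγ : -1 ≤ γ * l) (hv : 0 ≤ v) :
    -γ * v ≤ v / l * (1 / x - 1) - γ * (v * x) := by
  obtain ⟨hx0, hx1⟩ := hx
  have hγx : 0 ≤ 1 + γ * l * x := by nlinarith
  have hgap : v / l * (1 / x - 1) - γ * (v * x) - -γ * v
      = v * (1 - x) * (1 + γ * l * x) / (l * x) := by
    field_simp
    ring
  rw [← sub_nonneg, hgap]
  have : 0 ≤ 1 - x := by linarith
  positivity

lemma isLeast_objective_image_pi_Icc {ι : Type*} [Fintype ι] {σ lam : ι → ℝ} {ε γ : ℝ}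
    (hε : ε ∈ Set.Ioc 0 1) (hlam : ∀ j, 0 < lam j) (hγ : ∀ j, -1 ≤ γ * lam j) :
    IsLeast ((fun b : ι → ℝ => ∑ j, σ j ^ 2 / lam j * (1 / b j - 1) - γ * ∑ j, σ j ^ 2 * b j) ''
      {b | ∀ j, b j ∈ Set.Icc ε 1}) (-γ * ∑ j, σ j ^ 2) := by
  refine ⟨⟨fun _ => 1, fun _ => ⟨hε.2, le_rfl⟩, by simp⟩, ?_⟩
  rintro _ ⟨b, hb, rfl⟩
  simp only [Finset.mul_sum, ← Finset.sum_sub_distrib]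
  exact Finset.sum_le_sum fun j _ => neg_mul_le_div_mul_sub_mul (hlam j)
    ⟨hε.1.trans_le (hb j).1, (hb j).2⟩ (hγ j) (sq_nonneg _)

lemma integral_sub_sq (T : ℝ) : ∫ t in (0 : ℝ)..T, (T - t) ^ 2 = T ^ 3 / 3 := by
  rw [intervalIntegral.integral_comp_sub_left (fun x => x ^ 2) T, integral_pow]
  norm_num

theorem no_effort_certainty_equivalent_general
    (d : ℕ) (σ lam : Fin d → ℝ)
    (hlam : ∀ j, 0 < lam j)
    (ε : ℝ) (hε : ε ∈ Set.Ioo (0 : ℝ) 1)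
    (B : Set (Fin d → ℝ)) (hB : B = {b | ∀ j, b j ∈ Set.Icc ε 1})
    (c₂ : (Fin d → ℝ) → ℝ)
    (hc₂ : c₂ = fun b => ∑ j, (σ j) ^ 2 / lam j * (1 / b j - 1))
    (σsq : (Fin d → ℝ) → ℝ) (hσsq : σsq = fun b => ∑ j, (σ j) ^ 2 * b j)
    (Hv : ℝ → ℝ)
    (hHv : Hv = fun γ => -(1 / 2) * sInf ((fun b => c₂ b - γ * σsq b) '' B))
    (lamb : ℝ) (hlamb : IsGreatest (Set.range lam) lamb)
    (s : ℝ) (hs : s = ∑ j, (σ j) ^ 2)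
    (T κ r : ℝ) (hT : 0 < T) (hr : 0 < r)
    (hsmall : r * κ ^ 2 * T ^ 2 ≤ 1 / lamb) :
    (∀ t ∈ Set.Icc (0 : ℝ) T,
        Hv (-(r * κ ^ 2 * (T - t) ^ 2)) = -(1 / 2) * r * κ ^ 2 * s * (T - t) ^ 2) ∧
      (∫ t in (0 : ℝ)..T, Hv (-(r * κ ^ 2 * (T - t) ^ 2))) = -(r * κ ^ 2 * s * T ^ 3 / 6) := by
  have hHv_eq (γ : ℝ) (hγ : ∀ j, -1 ≤ γ * lam j) : Hv γ = γ * s / 2 := by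
    subst hHv hB hc₂ hσsq hs
    beta_reduce
    rw [(isLeast_objective_image_pi_Icc ⟨hε.1, hε.2.le⟩ hlam hγ).csInf_eq]
    ring
  obtain ⟨⟨j₀, rfl⟩, hlam_le⟩ := hlamb
  have hrisk : r * κ ^ 2 * T ^ 2 * lam j₀ ≤ 1 := (le_div_iff₀ (hlam j₀)).mp hsmall
  have hpoint : ∀ t ∈ Set.Icc (0 : ℝ) T,
      Hv (-(r * κ ^ 2 * (T - t) ^ 2)) = -(1 / 2) * r * κ ^ 2 * s * (T - t) ^ 2 := by
    rintro t ⟨ht0, htT⟩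
    rw [hHv_eq _ fun j => ?_]
    · ring
    have : r * κ ^ 2 * (T - t) ^ 2 * lam j ≤ r * κ ^ 2 * T ^ 2 * lam j₀ := by
      gcongr
      · exact (hlam j).le
      · linarith
      · exact hlam_le ⟨j, rfl⟩
    linarith
  refine ⟨hpoint, ?_⟩
  rw [intervalIntegral.integral_congr (g := fun t => -(1 / 2) * r * κ ^ 2 * s * (T - t) ^ 2)
    fun t ht => hpoint t (Set.uIcc_of_le hT.le ▸ ht), intervalIntegral.integral_const_mul,
    integral_sub_sq]
  ring

/-- In the small-risk regime `rκ²T² ≤ 1/λ̄`, one has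
`H_v(−rκ²(T−t)²) = −(1/2) rκ² s (T−t)²` on `[0,T]`, and hence
`∫_0^T H_v(−rκ²(T−t)²) dt = −rκ² s T³/6`. -/
theorem no_effort_certainty_equivalent
    (d : ℕ) (hd : 1 ≤ d) (σ lam : Fin d → ℝ)
    (hσ : ∀ j, 0 < σ j) (hlam : ∀ j, 0 < lam j)
    (ε : ℝ) (hε : ε ∈ Set.Ioo (0 : ℝ) 1)
    (B : Set (Fin d → ℝ)) (hB : B = {b | ∀ j, b j ∈ Set.Icc ε 1})
    (c₂ : (Fin d → ℝ) → ℝ)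
    (hc₂ : c₂ = fun b => ∑ j, (σ j) ^ 2 / lam j * (1 / b j - 1))
    (σsq : (Fin d → ℝ) → ℝ) (hσsq : σsq = fun b => ∑ j, (σ j) ^ 2 * b j)
    (Hv : ℝ → ℝ)
    (hHv : Hv = fun γ => -(1 / 2) * sInf ((fun b => c₂ b - γ * σsq b) '' B))
    (lamb : ℝ) (hlamb : IsGreatest (Set.range lam) lamb)
    (s : ℝ) (hs : s = ∑ j, (σ j) ^ 2)
    (T κ r : ℝ) (hT : 0 < T) (hκ : 0 ≤ κ) (hr : 0 < r)
    (hsmall : r * κ ^ 2 * T ^ 2 ≤ 1 / lamb) :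
    (∀ t ∈ Set.Icc (0 : ℝ) T,
        Hv (-(r * κ ^ 2 * (T - t) ^ 2)) = -(1 / 2) * r * κ ^ 2 * s * (T - t) ^ 2) ∧
      (∫ t in (0 : ℝ)..T, Hv (-(r * κ ^ 2 * (T - t) ^ 2))) = -(r * κ ^ 2 * s * T ^ 3 / 6) :=
  no_effort_certainty_equivalent_general d σ lam hlam ε hε B hB c₂ hc₂ σsq hσsq Hv hHv lamb hlamb s
    hs T κ r hT hr hsmall
end

section
/- Let T > 0, δ ∈ ℝ, h ≥ 0, p, r > 0, ρ := rp/(r+p), and assume |δ| T ≤ A_max. Define m_FB(t) := (1/2) μ̄ (δ⁻)² (T−t)² + H_v(−h − ρ δ² (T−t)²) and v̄(t,x) := δ(T−t) x + ∫_t^T m_FB(s) ds. Then v̄(T, x) = 0 for all x ∈ ℝ; for each t the map x ↦ v̄(t,x) is affine with ∂_x v̄(t,x) = δ(T−t) and ∂²_{xx} v̄(t,x) = 0; and for every (t,x) ∈ (0,T) × ℝ the partial derivative ∂_t v̄(t,x) exists and satisfies −∂_t v̄(t,x) = δ x + H_m(∂_x v̄(t,x)) + H_v( ∂²_{xx} v̄(t,x)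 − ρ (∂_x v̄(t,x))² − h ). In other words, v̄ is a classical solution of the first-best HJB equation −∂_t v̄ = δx + H_m(v̄_x) + H_v(v̄_{xx} − ρ v̄_x² − h) on (0,T) × ℝ with v̄(T, ·) = 0. -/
/-!
Since `v̄` is affine in `x`, only the time derivative carries content. Coordinatewise the
control cost `z a + a² / (2μ)` over `a ≥ 0` is minimised at `a = μ z⁻`, which is admissible
because `|δ| T ≤ A_max`; this gives `H_m(δ(T-t)) = ½ μ̄ (δ⁻)² (T-t)²`. The Hamiltonian `H_v` is an
infimum of affine functions of `γ` with slopes bounded by `∑ σ_j²`, hence Lipschitz, so `m_FB` is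
continuous and the fundamental theorem of calculus differentiates `∫_t^T m_FB`.
-/

open Set Finset

section InfimumOfAffine

variable {ι : Type*} {S : Set ι} {f g : ι → ℝ}

lemma bddBelow_image_sub_mul_s8 (hf : BddBelow (f '' S)) {M : ℝ} (hg : ∀ b ∈ S, |g b| ≤ M)
    (γ : ℝ) : BddBelow ((fun b => f b - γ * g b) '' S) := by
  obtain ⟨c, hc⟩ := hf
  refine ⟨c - |γ| * M, ?_⟩
  rintro _ ⟨b, hb, rfl⟩
  have hslope : γ * g b ≤ |γ| * M := calc
    γ * g b ≤ |γ * g b| := le_abs_self _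
    _ = |γ| * |g b| := abs_mul _ _
    _ ≤ |γ| * M := mul_le_mul_of_nonneg_left (hg b hb) (abs_nonneg γ)
  linarith [hc ⟨b, hb, rfl⟩]

lemma lipschitzWith_sInf_image_sub_mul_s8 (hf : BddBelow (f '' S)) {M : NNReal}
    (hg : ∀ b ∈ S, |g b| ≤ M) :
    LipschitzWith M fun γ => sInf ((fun b => f b - γ * g b) '' S) := by
  rcases S.eq_empty_or_nonempty with rfl | hS
  · simpa using LipschitzWith.const' (0 : ℝ)
  refine LipschitzWith.of_le_add_mul M fun γ₁ γ₂ => ?_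
  suffices sInf ((fun b => f b - γ₁ * g b) '' S) - M * dist γ₁ γ₂
      ≤ sInf ((fun b => f b - γ₂ * g b) '' S) by linarith
  refine le_csInf (hS.image _) ?_
  rintro _ ⟨b, hb, rfl⟩
  have hinf := csInf_le (bddBelow_image_sub_mul_s8 hf hg γ₁) ⟨b, hb, rfl⟩
  have hslope : (γ₂ - γ₁) * g b ≤ M * dist γ₁ γ₂ := calc
    (γ₂ - γ₁) * g b ≤ |(γ₂ - γ₁) * g b| := le_abs_self _
    _ = |g b| * dist γ₁ γ₂ := by rw [abs_mul, Real.dist_eq, abs_sub_comm, mul_comm]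
    _ ≤ M * dist γ₁ γ₂ := mul_le_mul_of_nonneg_right (hg b hb) dist_nonneg
  simp only at hinf ⊢
  linarith

end InfimumOfAffine

section VolatilityHamiltonian

variable {ι : Type*} [Fintype ι] {σ lam : ι → ℝ} {ε : ℝ}

lemma bddBelow_image_volatility_cost (hlam : ∀ j, 0 < lam j) (hε : 0 < ε) :
    BddBelow ((fun b => ∑ j, σ j ^ 2 / lam j * (1 / b j - 1)) ''
      {b : ι → ℝ | ∀ j, b j ∈ Icc ε 1}) := by
  refine ⟨0, ?_⟩
  rintro _ ⟨b, hb, rfl⟩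
  refine sum_nonneg fun j _ => mul_nonneg (div_nonneg (sq_nonneg _) (hlam j).le) ?_
  have hbj : 0 < b j := hε.trans_le (hb j).1
  rw [sub_nonneg, le_div_iff₀ hbj, one_mul]
  exact (hb j).2

lemma abs_volatility_le (hε : 0 < ε) {b : ι → ℝ} (hb : ∀ j, b j ∈ Icc ε 1) :
    |∑ j, σ j ^ 2 * b j| ≤ ∑ j, σ j ^ 2 := by
  have hb0 : ∀ j, 0 ≤ b j := fun j => hε.le.trans (hb j).1
  rw [abs_of_nonneg (sum_nonneg fun j _ => mul_nonneg (sq_nonneg _) (hb0 j))]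
  exact sum_le_sum fun j _ => mul_le_of_le_one_right (sq_nonneg _) (hb j).2

lemma continuous_volatility_hamiltonian (hlam : ∀ j, 0 < lam j) (hε : 0 < ε) :
    Continuous fun γ => -(1 / 2) * sInf ((fun b => ∑ j, σ j ^ 2 / lam j * (1 / b j - 1)
      - γ * ∑ j, σ j ^ 2 * b j) '' {b : ι → ℝ | ∀ j, b j ∈ Icc ε 1}) := by
  have hM : (0 : ℝ) ≤ ∑ j, σ j ^ 2 := sum_nonneg fun j _ => sq_nonneg _
  refine continuous_const.mul (lipschitzWith_sInf_image_sub_mul_s8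
    (M := ⟨_, hM⟩) (bddBelow_image_volatility_cost hlam hε) ?_).continuous
  exact fun b hb => abs_volatility_le hε hb

end VolatilityHamiltonian

section ControlHamiltonian

/-- For `a ≥ 0` the cost `z a + a² / (2m)` is minimised at `a = m z⁻`. -/
lemma neg_half_mul_sq_le_mul_add_sq_div {m z a : ℝ} (hm : 0 < m) (ha : 0 ≤ a) :
    -(1 / 2 * m * max (-z) 0 ^ 2) ≤ z * a + 1 / 2 * (a ^ 2 / m) := by
  have ha2 : 0 ≤ a ^ 2 / m := div_nonneg (sq_nonneg a) hm.le
  rcases le_total 0 z with hz | hz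
  · rw [max_eq_right (neg_nonpos.mpr hz)]
    nlinarith
  · rw [max_eq_left (neg_nonneg.mpr hz)]
    have hsq : a ^ 2 / m * m = a ^ 2 := div_mul_cancel₀ _ hm.ne'
    nlinarith [sq_nonneg (a + m * z)]

lemma mul_add_sq_div_at_optimum {m : ℝ} (hm : m ≠ 0) (z : ℝ) :
    z * (m * max (-z) 0) + 1 / 2 * ((m * max (-z) 0) ^ 2 / m) = -(1 / 2 * m * max (-z) 0 ^ 2) := by
  have hz : z * max (-z) 0 = -max (-z) 0 ^ 2 := by
    rcases le_total 0 z with hz | hz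
    · rw [max_eq_right (neg_nonpos.mpr hz)]; ring
    · rw [max_eq_left (neg_nonneg.mpr hz)]; ring
  have hsq : (m * max (-z) 0) ^ 2 / m = m * max (-z) 0 ^ 2 := by field_simp
  rw [hsq]
  linear_combination m * hz

variable {ι : Type*} [Fintype ι] {μ : ι → ℝ}

lemma isLeast_image_linear_add_quadratic_cost (hμ : ∀ i, 0 < μ i) {z Amax : ℝ}
    (hz : max (-z) 0 ≤ Amax) :
    IsLeast ((fun a => z * ∑ i, a i + 1 / 2 * ∑ i, a i ^ 2 / μ i) ''
      {a : ι → ℝ | ∀ i, a i ∈ Icc 0 (μ i * Amax)}) (-(1 / 2) * (∑ i, μ i) * max (-z) 0 ^ 2) := by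
  have hsplit : ∀ a : ι → ℝ, z * ∑ i, a i + 1 / 2 * ∑ i, a i ^ 2 / μ i
      = ∑ i, (z * a i + 1 / 2 * (a i ^ 2 / μ i)) := by
    intro a; rw [sum_add_distrib, mul_sum, mul_sum]
  have htarget : -(1 / 2) * (∑ i, μ i) * max (-z) 0 ^ 2
      = ∑ i, -(1 / 2 * μ i * max (-z) 0 ^ 2) := by
    rw [sum_neg_distrib, ← sum_mul, ← mul_sum]; ring
  have hzm : 0 ≤ max (-z) 0 := le_max_right _ _
  refine ⟨⟨fun i => μ i * max (-z) 0, fun i => ⟨mul_nonneg (hμ i).le hzm,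
    mul_le_mul_of_nonneg_left hz (hμ i).le⟩, ?_⟩, ?_⟩
  · simp only [hsplit, htarget, mul_add_sq_div_at_optimum (hμ _).ne']
  · rintro _ ⟨a, ha, rfl⟩
    simp only [hsplit, htarget]
    exact sum_le_sum fun i _ => neg_half_mul_sq_le_mul_add_sq_div (hμ i) (ha i).1

end ControlHamiltonian

lemma hasDerivAt_affine_add_integral {m : ℝ → ℝ} (hm : Continuous m) (δ T x t : ℝ) :
    HasDerivAt (fun s => δ * (T - s) * x + ∫ u in s..T, m u) (-(δ * x + m t)) t := by
  have hint : HasDerivAt (fun s => ∫ u in s..T, m u) (-m t) t :=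
    intervalIntegral.integral_hasDerivAt_left (hm.intervalIntegrable _ _)
      (hm.stronglyMeasurableAtFilter _ _) hm.continuousAt
  exact ((((hasDerivAt_id t).const_sub T).const_mul δ).mul_const x).add hint |>.congr_deriv
    (by ring)

theorem first_best_HJB_solution_general
    (d : ℕ) (σ lam : Fin d → ℝ)
    (hlam : ∀ j, 0 < lam j)
    (ε : ℝ) (hε : ε ∈ Set.Ioo (0 : ℝ) 1)
    (B : Set (Fin d → ℝ)) (hB : B = {b | ∀ j, b j ∈ Set.Icc ε 1})
    (c₂ : (Fin d → ℝ) → ℝ)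
    (hc₂ : c₂ = fun b => ∑ j, (σ j) ^ 2 / lam j * (1 / b j - 1))
    (σsq : (Fin d → ℝ) → ℝ) (hσsq : σsq = fun b => ∑ j, (σ j) ^ 2 * b j)
    (Hv : ℝ → ℝ)
    (hHv : Hv = fun γ => -(1 / 2) * sInf ((fun b => c₂ b - γ * σsq b) '' B))
    (N : ℕ) (μ : Fin N → ℝ) (hμ : ∀ i, 0 < μ i)
    (Amax : ℝ)
    (A : Set (Fin N → ℝ)) (hA : A = {a | ∀ i, a i ∈ Set.Icc 0 (μ i * Amax)})
    (c₁ : (Fin N → ℝ) → ℝ) (hc₁ : c₁ = fun a => (1 / 2) * ∑ i, (a i) ^ 2 / μ i)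
    (μbar : ℝ) (hμbar : μbar = ∑ i, μ i)
    (Hm : ℝ → ℝ)
    (hHm : Hm = fun z => - sInf ((fun a => z * (∑ i, a i) + c₁ a) '' A))
    (T δ h ρ : ℝ)
    (hδT : |δ| * T ≤ Amax)
    (mFB : ℝ → ℝ)
    (hmFB : mFB = fun t =>
      (1 / 2) * μbar * (max (-δ) 0) ^ 2 * (T - t) ^ 2 + Hv (-h - ρ * δ ^ 2 * (T - t) ^ 2))
    (vb : ℝ → ℝ → ℝ)
    (hvb : vb = fun t x => δ * (T - t) * x + ∫ s in t..T, mFB s) :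
    (∀ x, vb T x = 0) ∧
      (∀ t x, HasDerivAt (vb t) (δ * (T - t)) x) ∧
      (∀ t x, HasDerivAt (deriv (vb t)) 0 x) ∧
      (∀ t ∈ Set.Ioo (0 : ℝ) T, ∀ x : ℝ,
        HasDerivAt (fun s => vb s x)
          (-(δ * x + Hm (δ * (T - t)) + Hv ((0 : ℝ) - ρ * (δ * (T - t)) ^ 2 - h))) t) := by
  subst hB hc₂ hσsq hA hc₁ hμbar hvb
  have hHv_cont : Continuous Hv := hHv ▸ continuous_volatility_hamiltonian hlam hε.1
  have hmFB_cont : Continuous mFB := hmFB ▸ by fun_prop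
  have hvb_x : ∀ t x, HasDerivAt (fun x => δ * (T - t) * x + ∫ s in t..T, mFB s) (δ * (T - t)) x :=
    fun t x => by simpa using ((hasDerivAt_id' x).const_mul (δ * (T - t))).add_const (∫ s in t..T, mFB s)
  refine ⟨fun x => by simp, hvb_x, fun t x => ?_, fun t ht x => ?_⟩
  · rw [funext fun y => (hvb_x t y).deriv]
    exact hasDerivAt_const x _
  · have hTt : 0 ≤ T - t := sub_nonneg.mpr ht.2.le
    have hneg : max (-(δ * (T - t))) 0 = max (-δ) 0 * (T - t) := by
      rw [max_mul_of_nonneg _ _ hTt, zero_mul, neg_mul]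
    have hbound : max (-δ) 0 * (T - t) ≤ Amax := calc
      max (-δ) 0 * (T - t) ≤ |δ| * T := mul_le_mul (max_le (neg_le_abs δ) (abs_nonneg δ))
        (by linarith [ht.1]) hTt (abs_nonneg δ)
      _ ≤ Amax := hδT
    have hHm_val : Hm (δ * (T - t)) = 1 / 2 * (∑ i, μ i) * (max (-δ) 0 * (T - t)) ^ 2 := by
      rw [hHm]
      dsimp only
      rw [← hneg, (isLeast_image_linear_add_quadratic_cost hμ (hneg ▸ hbound)).csInf_eq]
      ring
    convert hasDerivAt_affine_add_integral hmFB_cont δ T x t using 2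
    rw [hHm_val, hmFB]
    ring_nf

/-- The function `v̄(t,x) = δ(T−t)x + ∫_t^T m_FB(s) ds`, with
`m_FB(t) = (1/2)μ̄(δ⁻)²(T−t)² + H_v(−h − ρδ²(T−t)²)`, is a classical solution of the
first-best HJB equation `−∂_t v̄ = δx + H_m(v̄_x) + H_v(v̄_xx − ρ v̄_x² − h)` on `(0,T) × ℝ`
with `v̄(T,·) = 0`, `v̄_x(t,x) = δ(T−t)` and `v̄_xx = 0`. -/
theorem first_best_HJB_solution
    (d : ℕ) (hd : 1 ≤ d) (σ lam : Fin d → ℝ)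
    (hσ : ∀ j, 0 < σ j) (hlam : ∀ j, 0 < lam j)
    (ε : ℝ) (hε : ε ∈ Set.Ioo (0 : ℝ) 1)
    (B : Set (Fin d → ℝ)) (hB : B = {b | ∀ j, b j ∈ Set.Icc ε 1})
    (c₂ : (Fin d → ℝ) → ℝ)
    (hc₂ : c₂ = fun b => ∑ j, (σ j) ^ 2 / lam j * (1 / b j - 1))
    (σsq : (Fin d → ℝ) → ℝ) (hσsq : σsq = fun b => ∑ j, (σ j) ^ 2 * b j)
    (Hv : ℝ → ℝ)
    (hHv : Hv = fun γ => -(1 / 2) * sInf ((fun b => c₂ b - γ * σsq b) '' B))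
    (N : ℕ) (hN : 1 ≤ N) (μ : Fin N → ℝ) (hμ : ∀ i, 0 < μ i)
    (Amax : ℝ) (hAmax : 0 < Amax)
    (A : Set (Fin N → ℝ)) (hA : A = {a | ∀ i, a i ∈ Set.Icc 0 (μ i * Amax)})
    (c₁ : (Fin N → ℝ) → ℝ) (hc₁ : c₁ = fun a => (1 / 2) * ∑ i, (a i) ^ 2 / μ i)
    (μbar : ℝ) (hμbar : μbar = ∑ i, μ i)
    (Hm : ℝ → ℝ)
    (hHm : Hm = fun z => - sInf ((fun a => z * (∑ i, a i) + c₁ a) '' A))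
    (T δ h p r ρ : ℝ) (hT : 0 < T) (hh : 0 ≤ h) (hp : 0 < p) (hr : 0 < r)
    (hρ : ρ = r * p / (r + p)) (hδT : |δ| * T ≤ Amax)
    (mFB : ℝ → ℝ)
    (hmFB : mFB = fun t =>
      (1 / 2) * μbar * (max (-δ) 0) ^ 2 * (T - t) ^ 2 + Hv (-h - ρ * δ ^ 2 * (T - t) ^ 2))
    (vb : ℝ → ℝ → ℝ)
    (hvb : vb = fun t x => δ * (T - t) * x + ∫ s in t..T, mFB s) :
    (∀ x, vb T x = 0) ∧
      (∀ t x, HasDerivAt (vb t) (δ * (T - t)) x) ∧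
      (∀ t x, HasDerivAt (deriv (vb t)) 0 x) ∧
      (∀ t ∈ Set.Ioo (0 : ℝ) T, ∀ x : ℝ,
        HasDerivAt (fun s => vb s x)
          (-(δ * x + Hm (δ * (T - t)) + Hv ((0 : ℝ) - ρ * (δ * (T - t)) ^ 2 - h))) t) :=
  first_best_HJB_solution_general d σ lam hlam ε hε B hB c₂ hc₂ σsq hσsq Hv hHv N μ hμ Amax A hA c₁
    hc₁ μbar hμbar Hm hHm T δ h ρ hδT mFB hmFB vb hvb
end

section
/- Let T > 0, δ ∈ ℝ, h ≥ 0, p, r > 0 and μ̄ > 0. Define m_SB(t) := (1/2) μ̄ δ² (T−t)² − (1/2) inf_{z ∈ ℝ} { F₀(h + r z² + p(z − δ(T−t))²) + μ̄ (z⁻ + δ(T−t))² } and v(t,x) := δ(T−t) x + ∫_t^T m_SB(s) ds. Then the map t ↦ m_SB(t) is continuous on [0,T]; v(T, x) = 0 for all x ∈ ℝ; for each t the map x ↦ v(t,x) is affine with ∂_x v(t,x) = δ(T−t) and ∂²_{xx} v(t,x) = 0; and for every (t,x) ∈ (0,T) × ℝ the partial derivative ∂_t v(t,x) exists and satisfies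 −∂_t v(t,x) = δ x + (1/2) μ̄ (∂_x v(t,x))² − (1/2) inf_{z ∈ ℝ} { F₀( h − ∂²_{xx} v(t,x) + r z² + p(z − ∂_x v(t,x))² ) + μ̄ (z⁻ + ∂_x v(t,x))² }. In other words, v is a classical solution of the second-best HJB equation with terminal condition v(T, ·) = 0. -/
/-!
Since `φ x ≥ ε x - 1`, the function `F₀` grows at least linearly, so for `δ (T - t)` in a
bounded set every `z` outside a fixed compact set does worse than `z = 0`. The infimum defining
`m_SB` is therefore locally an infimum over a compact set of a jointly continuous function, hence
continuous in `t`. Since `v` is affine in `x`, the HJB equation then reduces to the fundamental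
theorem of calculus for `∫_t^T m_SB`.
-/

open Set Filter Topology Function

noncomputable def phiEps (ε x : ℝ) : ℝ :=
  if x ≤ 1 then x else if x < (ε ^ 2)⁻¹ then 2 * √x - 1 else ε * x + ε⁻¹ - 1

section phiEps

variable {ε : ℝ}

theorem continuous_phiEps (hε0 : 0 < ε) (hε1 : ε < 1) : Continuous (phiEps ε) := by
  have hsqrt : √((ε ^ 2)⁻¹) = ε⁻¹ := by rw [Real.sqrt_inv, Real.sqrt_sq hε0.le]
  have hone : 1 < (ε ^ 2)⁻¹ := (one_lt_inv₀ (by positivity)).2 (by nlinarith)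
  have hle_form : phiEps ε = fun x =>
      if x ≤ 1 then x else if (ε ^ 2)⁻¹ ≤ x then ε * x + ε⁻¹ - 1 else 2 * √x - 1 := by
    funext x
    unfold phiEps
    split_ifs <;> first | rfl | (exfalso; linarith)
  rw [hle_form]
  refine continuous_id.if_le (Continuous.if_le (by fun_prop) (by fun_prop) continuous_const
    continuous_id ?_) continuous_id continuous_const ?_
  · rintro x rfl
    rw [hsqrt]
    field_simp
    ring
  · rintro x rfl
    rw [if_neg (not_le.2 hone), Real.sqrt_one]
    norm_num

theorem mul_sub_one_le_phiEps (hε0 : 0 < ε) (hε1 : ε ≤ 1) {x : ℝ} (hx : 0 ≤ x) :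
    ε * x - 1 ≤ phiEps ε x := by
  have hε_inv := inv_pos.2 hε0
  unfold phiEps
  split_ifs with h1 h2
  · nlinarith
  · have hs : ε * √x < 1 := by
      have := Real.sqrt_lt_sqrt hx h2
      rw [Real.sqrt_inv, Real.sqrt_sq hε0.le] at this
      calc ε * √x < ε * ε⁻¹ := by gcongr
        _ = 1 := mul_inv_cancel₀ hε0.ne'
    have hsx := Real.mul_self_sqrt hx
    nlinarith [Real.sqrt_nonneg x]
  · linarith

end phiEps

theorem sum_mul_phiEps_ge {ι : Type*} [Fintype ι] {ε : ℝ} {w lam : ι → ℝ}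
    (hε0 : 0 < ε) (hε1 : ε ≤ 1) (hw : ∀ j, 0 ≤ w j) (hlam : ∀ j, 0 < lam j) {q : ℝ}
    (hq : 0 ≤ q) :
    ε * (∑ j, w j) * q - ∑ j, w j / lam j ≤ ∑ j, w j / lam j * phiEps ε (lam j * q) := by
  rw [Finset.mul_sum, Finset.sum_mul, ← Finset.sum_sub_distrib]
  refine Finset.sum_le_sum fun j _ => ?_
  have hlamj := hlam j
  calc ε * w j * q - w j / lam j = w j / lam j * (ε * (lam j * q) - 1) := by field_simp
    _ ≤ w j / lam j * phiEps ε (lam j * q) := by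
      have := hw j
      gcongr
      exact mul_sub_one_le_phiEps hε0 hε1 (by positivity)

theorem sInf_range_eq_sInf_image {β : Type*} [Nonempty β] {f : β → ℝ} {K : Set β}
    (hK : BddBelow (f '' K)) (hmin : ∀ z, ∃ z' ∈ K, f z' ≤ f z) :
    sInf (range f) = sInf (f '' K) := by
  obtain ⟨m, hm⟩ := hK
  have hle : ∀ b, (∀ y ∈ f '' K, b ≤ y) → ∀ z, b ≤ f z := fun b hb z =>
    let ⟨z', hz', hz⟩ := hmin z; (hb _ (mem_image_of_mem f hz')).trans hz
  obtain ⟨z', hz', -⟩ := hmin (Classical.arbitrary β)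
  apply le_antisymm
  · exact csInf_le_csInf ⟨m, forall_mem_range.2 (hle m hm)⟩ ⟨f z', mem_image_of_mem f hz'⟩
      (image_subset_range f K)
  · exact le_csInf (range_nonempty f) (forall_mem_range.2 (hle _ fun y hy => csInf_le ⟨m, hm⟩ hy))

theorem continuous_sInf_range_of_locally_compact_minimizing {X β : Type*} [TopologicalSpace X]
    [TopologicalSpace β] [Nonempty β] {g : X → β → ℝ} (hg : Continuous ↿g)
    (hloc : ∀ x₀, ∃ U ∈ 𝓝 x₀, ∃ K, IsCompact K ∧ ∀ x ∈ U, ∀ z, ∃ z' ∈ K, g x z' ≤ g x z) :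
    Continuous fun x => sInf (range (g x)) := by
  refine continuous_iff_continuousAt.2 fun x₀ => ?_
  obtain ⟨U, hU, K, hK, hmin⟩ := hloc x₀
  refine (hK.continuous_sInf hg).continuousAt.congr ?_
  filter_upwards [hU] with x hx
  exact (sInf_range_eq_sInf_image ((hK.image (hg.uncurry_left x)).bddBelow) (hmin x hx)).symm

theorem continuous_sInf_range_hamiltonian {F : ℝ → ℝ} {c C h r p μ : ℝ} (hF : Continuous F)
    (hc : 0 < c) (hFge : ∀ q, 0 ≤ q → c * q - C ≤ F q) (hh : 0 ≤ h) (hr : 0 < r) (hp : 0 ≤ p)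
    (hμ : 0 ≤ μ) :
    Continuous fun a =>
      sInf (range fun z => F (h + r * z ^ 2 + p * (z - a) ^ 2) + μ * (max (-z) 0 + a) ^ 2) := by
  set G : ℝ → ℝ → ℝ := fun a z => F (h + r * z ^ 2 + p * (z - a) ^ 2) + μ * (max (-z) 0 + a) ^ 2
  refine continuous_sInf_range_of_locally_compact_minimizing (g := G) (by fun_prop) fun a₀ => ?_
  obtain ⟨B, hB⟩ := (isCompact_closedBall a₀ 1).bddAbove_image
    (f := fun a => G a 0) (by fun_prop : Continuous fun a => G a 0).continuousOn
  have hgrowth : Tendsto (fun z : ℝ => c * (r * z ^ 2) - C) (cocompact ℝ) atTop := by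
    have := ((tendsto_pow_atTop two_ne_zero).comp
      (tendsto_norm_cocompact_atTop (E := ℝ))).const_mul_atTop (mul_pos hc hr)
    simpa [Real.norm_eq_abs, mul_assoc, ← sub_eq_add_neg] using
      tendsto_atTop_add_const_right _ (-C) this
  obtain ⟨K, hK, hKc⟩ := mem_cocompact.1 (hgrowth.eventually_ge_atTop B)
  refine ⟨_, Metric.closedBall_mem_nhds a₀ one_pos, insert 0 K, hK.insert 0, fun a ha z => ?_⟩
  by_cases hz : z ∈ K
  · exact ⟨z, mem_insert_of_mem _ hz, le_rfl⟩
  refine ⟨0, mem_insert _ _, ?_⟩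
  calc G a 0 ≤ B := hB (mem_image_of_mem _ ha)
    _ ≤ c * (r * z ^ 2) - C := hKc hz
    _ ≤ c * (h + r * z ^ 2 + p * (z - a) ^ 2) - C := by gcongr; nlinarith [sq_nonneg (z - a)]
    _ ≤ F (h + r * z ^ 2 + p * (z - a) ^ 2) := hFge _ (by positivity)
    _ ≤ G a z := le_add_of_nonneg_right (by positivity)

theorem hasDerivAt_mul_sub_add_integral {m : ℝ → ℝ} (hm : Continuous m) (δ T x t : ℝ) :
    HasDerivAt (fun s => δ * (T - s) * x + ∫ u in s..T, m u) (-(δ * x) + -m t) t := by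
  have h_lin : HasDerivAt (fun s => δ * (T - s) * x) (-(δ * x)) t := by
    simpa using (((hasDerivAt_id t).const_sub T).const_mul δ).mul_const x
  exact h_lin.add (intervalIntegral.integral_hasDerivAt_left (hm.intervalIntegrable _ _)
    (hm.stronglyMeasurableAtFilter _ _) hm.continuousAt)

theorem second_best_HJB_solution_general
    (d : ℕ) (hd : 1 ≤ d) (σ lam : Fin d → ℝ)
    (hσ : ∀ j, 0 < σ j) (hlam : ∀ j, 0 < lam j)
    (ε : ℝ) (hε : ε ∈ Set.Ioo (0 : ℝ) 1)
    (φ : ℝ → ℝ)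
    (hφ : φ = fun x =>
      if x ≤ 1 then x else if x < (ε ^ 2)⁻¹ then 2 * Real.sqrt x - 1 else ε * x + ε⁻¹ - 1)
    (F₀ : ℝ → ℝ) (hF₀ : F₀ = fun q => ∑ j, (σ j) ^ 2 / lam j * φ (lam j * q))
    (T δ h p r μbar : ℝ) (hh : 0 ≤ h) (hp : 0 < p) (hr : 0 < r)
    (hμbar : 0 < μbar)
    (mSB : ℝ → ℝ)
    (hmSB : mSB = fun t =>
      (1 / 2) * μbar * δ ^ 2 * (T - t) ^ 2 -
        (1 / 2) * sInf (Set.range fun z : ℝ =>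
          F₀ (h + r * z ^ 2 + p * (z - δ * (T - t)) ^ 2) +
            μbar * (max (-z) 0 + δ * (T - t)) ^ 2))
    (v : ℝ → ℝ → ℝ)
    (hv : v = fun t x => δ * (T - t) * x + ∫ s in t..T, mSB s) :
    ContinuousOn mSB (Set.Icc 0 T) ∧
      (∀ x, v T x = 0) ∧
      (∀ t x, HasDerivAt (v t) (δ * (T - t)) x) ∧
      (∀ t x, HasDerivAt (deriv (v t)) 0 x) ∧
      (∀ t ∈ Set.Ioo (0 : ℝ) T, ∀ x : ℝ,
        HasDerivAt (fun s => v s x)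
          (-(δ * x + (1 / 2) * μbar * (δ * (T - t)) ^ 2 -
              (1 / 2) * sInf (Set.range fun z : ℝ =>
                F₀ (h - 0 + r * z ^ 2 + p * (z - δ * (T - t)) ^ 2) +
                  μbar * (max (-z) 0 + δ * (T - t)) ^ 2))) t) := by
  obtain ⟨hε0, hε1⟩ := hε
  replace hF₀ : F₀ = fun q => ∑ j, σ j ^ 2 / lam j * phiEps ε (lam j * q) := by
    subst hφ; exact hF₀
  have hF₀cont : Continuous F₀ := by
    have := continuous_phiEps hε0 hε1
    subst hF₀
    fun_prop
  have hS : 0 < ε * ∑ j, σ j ^ 2 :=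
    mul_pos hε0 (Finset.sum_pos (fun j _ => pow_pos (hσ j) 2) ⟨⟨0, hd⟩, Finset.mem_univ _⟩)
  have hF₀ge (q : ℝ) (hq : 0 ≤ q) : ε * (∑ j, σ j ^ 2) * q - ∑ j, σ j ^ 2 / lam j ≤ F₀ q :=
    hF₀ ▸ sum_mul_phiEps_ge hε0 hε1.le (fun j => sq_nonneg _) hlam hq
  have hmSB_cont : Continuous mSB := by
    rw [hmSB]
    exact (by fun_prop : Continuous fun t => (1 / 2) * μbar * δ ^ 2 * (T - t) ^ 2).sub
      (continuous_const.mul ((continuous_sInf_range_hamiltonian hF₀cont hS hF₀ge hh hr hp.le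
        hμbar.le).comp (by fun_prop : Continuous fun t => δ * (T - t))))
  have hv_x (t x : ℝ) : HasDerivAt (v t) (δ * (T - t)) x := by
    subst hv
    simpa using ((hasDerivAt_id x).const_mul (δ * (T - t))).add_const (∫ s in t..T, mSB s)
  refine ⟨hmSB_cont.continuousOn, fun x => by simp [hv], hv_x, fun t x => ?_, fun t _ x => ?_⟩
  · rw [funext fun y => (hv_x t y).deriv]
    exact hasDerivAt_const x _
  · subst hv
    refine (hasDerivAt_mul_sub_add_integral hmSB_cont δ T x t).congr_deriv ?_
    simp only [hmSB, sub_zero]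
    ring

/-- The function `v(t,x) = δ(T−t)x + ∫_t^T m_SB(s) ds`, with
`m_SB(t) = (1/2)μ̄δ²(T−t)² − (1/2) inf_z { F₀(h + rz² + p(z−δ(T−t))²) + μ̄(z⁻+δ(T−t))² }`,
is a classical solution of the second-best HJB equation with terminal condition `v(T,·)=0`;
moreover `m_SB` is continuous on `[0,T]`, `v_x(t,x) = δ(T−t)`, `v_xx = 0`. -/
theorem second_best_HJB_solution
    (d : ℕ) (hd : 1 ≤ d) (σ lam : Fin d → ℝ)
    (hσ : ∀ j, 0 < σ j) (hlam : ∀ j, 0 < lam j)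
    (ε : ℝ) (hε : ε ∈ Set.Ioo (0 : ℝ) 1)
    (φ : ℝ → ℝ)
    (hφ : φ = fun x =>
      if x ≤ 1 then x else if x < (ε ^ 2)⁻¹ then 2 * Real.sqrt x - 1 else ε * x + ε⁻¹ - 1)
    (F₀ : ℝ → ℝ) (hF₀ : F₀ = fun q => ∑ j, (σ j) ^ 2 / lam j * φ (lam j * q))
    (T δ h p r μbar : ℝ) (hT : 0 < T) (hh : 0 ≤ h) (hp : 0 < p) (hr : 0 < r)
    (hμbar : 0 < μbar)
    (mSB : ℝ → ℝ)
    (hmSB : mSB = fun t =>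
      (1 / 2) * μbar * δ ^ 2 * (T - t) ^ 2 -
        (1 / 2) * sInf (Set.range fun z : ℝ =>
          F₀ (h + r * z ^ 2 + p * (z - δ * (T - t)) ^ 2) +
            μbar * (max (-z) 0 + δ * (T - t)) ^ 2))
    (v : ℝ → ℝ → ℝ)
    (hv : v = fun t x => δ * (T - t) * x + ∫ s in t..T, mSB s) :
    ContinuousOn mSB (Set.Icc 0 T) ∧
      (∀ x, v T x = 0) ∧
      (∀ t x, HasDerivAt (v t) (δ * (T - t)) x) ∧
      (∀ t x, HasDerivAt (deriv (v t)) 0 x) ∧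
      (∀ t ∈ Set.Ioo (0 : ℝ) T, ∀ x : ℝ,
        HasDerivAt (fun s => v s x)
          (-(δ * x + (1 / 2) * μbar * (δ * (T - t)) ^ 2 -
              (1 / 2) * sInf (Set.range fun z : ℝ =>
                F₀ (h - 0 + r * z ^ 2 + p * (z - δ * (T - t)) ^ 2) +
                  μbar * (max (-z) 0 + δ * (T - t)) ^ 2))) t) :=
  second_best_HJB_solution_general d hd σ lam hσ hlam ε hε φ hφ F₀ hF₀ T δ h p r μbar hh hp hr hμbar
    mSB hmSB v hv
end

section
/- Let h ≥ 0, p, r > 0, μ̄ > 0, ρ := rp/(r+p) and c ≥ 0. Then inf_{z ∈ ℝ} { F₀(h + r z² + p(z − c)²) + μ̄ (z⁻ + c)² } = F₀(h + ρ c²) + μ̄ c², and the infimum is attained at z* := (p/(r+p)) c; in particular h + r (z*)² + p(z* − c)² = h + ρ c². -/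
/-!
Completing the square gives `r z² + p (z - c)² = (r + p) (z - z*)² + ρ c²`, so the argument of `F₀`
is smallest at `z*`, where it equals `h + ρ c²`. Since `φ` is nondecreasing, so is `F₀`, and
`(z⁻ + c)² ≥ c²` with equality for `z ≥ 0`; as `z* ≥ 0`, both terms of the objective are
minimised at `z*` simultaneously.
-/

open Real

noncomputable def sqrtHuber (ε x : ℝ) : ℝ :=
  if x ≤ 1 then x else if x < (ε ^ 2)⁻¹ then 2 * √x - 1 else ε * x + ε⁻¹ - 1

/-- The linear branch of `sqrtHuber` is the tangent to `2√x - 1` at `x = ε⁻²`. -/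
lemma two_mul_sqrt_sub_one_le {ε : ℝ} (hε : 0 < ε) {x : ℝ} (hx : 0 ≤ x) :
    2 * √x - 1 ≤ ε * x + ε⁻¹ - 1 := by
  have key : ε * x + ε⁻¹ - 2 * √x = (ε * √x - 1) ^ 2 / ε := by
    field_simp
    linear_combination (-ε ^ 2) * sq_sqrt hx
  have : 0 ≤ (ε * √x - 1) ^ 2 / ε := by positivity
  linarith

lemma monotone_sqrtHuber {ε : ℝ} (hε : 0 < ε) : Monotone (sqrtHuber ε) := by
  intro a b hab
  have one_le_sqrt {x : ℝ} (hx : ¬x ≤ 1) : 1 ≤ √x := one_le_sqrt.2 (not_le.1 hx).le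
  have sqrt_mono : √a ≤ √b := sqrt_le_sqrt hab
  unfold sqrtHuber
  split_ifs with ha1 hb1 _ _ hb3
  · exact hab
  · linarith [one_le_sqrt hb1]
  · linarith [one_le_sqrt hb1, two_mul_sqrt_sub_one_le hε (x := b) (by linarith)]
  · exact absurd (hab.trans hb3) ha1
  · linarith
  · linarith [two_mul_sqrt_sub_one_le hε (x := b) (by linarith)]
  · exact absurd (hab.trans ‹b ≤ 1›) ha1
  · exact absurd (hab.trans_lt ‹b < (ε ^ 2)⁻¹›) ‹¬a < (ε ^ 2)⁻¹›
  · gcongr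

lemma monotone_sum_mul_comp_mul {ι : Type*} (s : Finset ι) {φ : ℝ → ℝ} (hφ : Monotone φ)
    {w lam : ι → ℝ} (hw : ∀ j, 0 ≤ w j) (hlam : ∀ j, 0 ≤ lam j) :
    Monotone fun q => ∑ j ∈ s, w j * φ (lam j * q) := fun _ _ hab =>
  Finset.sum_le_sum fun j _ =>
    mul_le_mul_of_nonneg_left (hφ (mul_le_mul_of_nonneg_left hab (hlam j))) (hw j)

lemma mul_sq_add_mul_sub_sq {r p : ℝ} (hrp : r + p ≠ 0) (z c : ℝ) :
    r * z ^ 2 + p * (z - c) ^ 2 = (r + p) * (z - p / (r + p) * c) ^ 2 + r * p / (r + p) * c ^ 2 := by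
  field_simp
  ring

lemma sq_le_sq_max_neg_zero_add {c : ℝ} (hc : 0 ≤ c) (z : ℝ) : c ^ 2 ≤ (max (-z) 0 + c) ^ 2 :=
  pow_le_pow_left₀ hc (le_add_of_nonneg_left (le_max_right _ _)) 2

theorem second_best_offpeak_infimum_general
    (d : ℕ) (σ lam : Fin d → ℝ)
    (hlam : ∀ j, 0 < lam j)
    (ε : ℝ) (hε : ε ∈ Set.Ioo (0 : ℝ) 1)
    (φ : ℝ → ℝ)
    (hφ : φ = fun x =>
      if x ≤ 1 then x else if x < (ε ^ 2)⁻¹ then 2 * Real.sqrt x - 1 else ε * x + ε⁻¹ - 1)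
    (F₀ : ℝ → ℝ) (hF₀ : F₀ = fun q => ∑ j, (σ j) ^ 2 / lam j * φ (lam j * q))
    (h p r μbar c ρ : ℝ) (hp : 0 < p) (hr : 0 < r) (hμbar : 0 < μbar)
    (hc : 0 ≤ c) (hρ : ρ = r * p / (r + p))
    (G : ℝ → ℝ)
    (hG : G = fun z =>
      F₀ (h + r * z ^ 2 + p * (z - c) ^ 2) + μbar * (max (-z) 0 + c) ^ 2)
    (zstar : ℝ) (hzstar : zstar = (p / (r + p)) * c) :
    (∀ z : ℝ, G zstar ≤ G z) ∧
      sInf (Set.range G) = F₀ (h + ρ * c ^ 2) + μbar * c ^ 2 ∧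
      h + r * zstar ^ 2 + p * (zstar - c) ^ 2 = h + ρ * c ^ 2 := by
  have hrp : r + p ≠ 0 := by positivity
  have hF₀_mono : Monotone F₀ := hF₀ ▸ monotone_sum_mul_comp_mul _
    (hφ ▸ monotone_sqrtHuber hε.1) (fun j => div_nonneg (sq_nonneg (σ j)) (hlam j).le) (fun j => (hlam j).le)
  have hquad_le (z : ℝ) : h + ρ * c ^ 2 ≤ h + r * z ^ 2 + p * (z - c) ^ 2 := by
    rw [add_assoc, mul_sq_add_mul_sub_sq hrp, hρ]
    nlinarith [sq_nonneg (z - p / (r + p) * c)]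
  have hquad_eq : h + r * zstar ^ 2 + p * (zstar - c) ^ 2 = h + ρ * c ^ 2 := by
    rw [add_assoc, mul_sq_add_mul_sub_sq hrp, hρ, ← hzstar]
    ring
  have hG_zstar : G zstar = F₀ (h + ρ * c ^ 2) + μbar * c ^ 2 := by
    have hzstar_nonneg : 0 ≤ zstar := by rw [hzstar]; positivity
    rw [hG]
    dsimp only
    rw [hquad_eq, max_eq_right (neg_nonpos.2 hzstar_nonneg), zero_add]
  have hmin (z : ℝ) : G zstar ≤ G z := by
    rw [hG_zstar, hG]
    exact add_le_add (hF₀_mono (hquad_le z))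
      (mul_le_mul_of_nonneg_left (sq_le_sq_max_neg_zero_add hc z) hμbar.le)
  refine ⟨hmin, ?_, hquad_eq⟩
  rw [← hG_zstar]
  exact IsLeast.csInf_eq ⟨⟨zstar, rfl⟩, by rintro _ ⟨z, rfl⟩; exact hmin z⟩

/-- For `c ≥ 0`,
`inf_z { F₀(h + rz² + p(z−c)²) + μ̄(z⁻+c)² } = F₀(h + ρc²) + μ̄c²`, the infimum being
attained at `z* = (p/(r+p))c`; in particular `h + r(z*)² + p(z*−c)² = h + ρc²`. -/
theorem second_best_offpeak_infimum
    (d : ℕ) (hd : 1 ≤ d) (σ lam : Fin d → ℝ)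
    (hσ : ∀ j, 0 < σ j) (hlam : ∀ j, 0 < lam j)
    (ε : ℝ) (hε : ε ∈ Set.Ioo (0 : ℝ) 1)
    (φ : ℝ → ℝ)
    (hφ : φ = fun x =>
      if x ≤ 1 then x else if x < (ε ^ 2)⁻¹ then 2 * Real.sqrt x - 1 else ε * x + ε⁻¹ - 1)
    (F₀ : ℝ → ℝ) (hF₀ : F₀ = fun q => ∑ j, (σ j) ^ 2 / lam j * φ (lam j * q))
    (h p r μbar c ρ : ℝ) (hh : 0 ≤ h) (hp : 0 < p) (hr : 0 < r) (hμbar : 0 < μbar)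
    (hc : 0 ≤ c) (hρ : ρ = r * p / (r + p))
    (G : ℝ → ℝ)
    (hG : G = fun z =>
      F₀ (h + r * z ^ 2 + p * (z - c) ^ 2) + μbar * (max (-z) 0 + c) ^ 2)
    (zstar : ℝ) (hzstar : zstar = (p / (r + p)) * c) :
    (∀ z : ℝ, G zstar ≤ G z) ∧
      sInf (Set.range G) = F₀ (h + ρ * c ^ 2) + μbar * c ^ 2 ∧
      h + r * zstar ^ 2 + p * (zstar - c) ^ 2 = h + ρ * c ^ 2 :=
  second_best_offpeak_infimum_general d σ lam hlam ε hε φ hφ F₀ hF₀ h p r μbar c ρ hp hr hμbar hc hρ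
    G hG zstar hzstar
end

section
/- Let s > 0, h ∈ ℝ, p, r > 0, μ̄ > 0 and c ∈ ℝ. Define Λ := (p s + μ̄·𝟙_{c<0}) / ((p+r) s + μ̄·𝟙_{c<0}), where 𝟙_{c<0} equals 1 if c < 0 and 0 otherwise. Then the function z ↦ (h + r z² + p(z − c)²) s + μ̄ (z⁻ + c)² attains its infimum over ℝ at the unique point z* = Λ c. -/
/-!
On `z ≤ 0` the objective is the quadratic obtained by replacing `z⁻ + c` with `c - z`, on
`z ≥ 0` the one obtained by replacing it with `c`. Both are strictly convex with vertex a
positive multiple of `c`, so each vertex lies on the side of `0` where `c` lies. On that side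
the objective is minimised strictly at its vertex `Λ c`; on the other side the other quadratic
is strictly monotone away from `0`, so there the objective exceeds its value at `0`, which is
at least the value at `Λ c`.
-/

open Set

section Vertex

variable {q : ℝ → ℝ} {a v : ℝ}

lemma lt_of_eq_vertex_add (ha : 0 < a) (hq : ∀ z, q z = q v + a * (z - v) ^ 2)
    {z : ℝ} (hz : z ≠ v) : q v < q z := by
  rw [hq z]
  exact lt_add_of_pos_right _ (mul_pos ha (pow_two_pos_of_ne_zero (sub_ne_zero.2 hz)))

lemma strictMonoOn_Ici_of_eq_vertex_add (ha : 0 < a) (hq : ∀ z, q z = q v + a * (z - v) ^ 2) :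
    StrictMonoOn q (Ici v) := by
  intro x hx y _ hxy
  rw [hq x, hq y]
  have := sub_nonneg.2 (mem_Ici.1 hx)
  gcongr

lemma strictAntiOn_Iic_of_eq_vertex_add (ha : 0 < a) (hq : ∀ z, q z = q v + a * (z - v) ^ 2) :
    StrictAntiOn q (Iic v) := by
  intro x _ y hy hxy
  rw [hq x, hq y, ← neg_sub v x, ← neg_sub v y, neg_sq, neg_sq]
  have := sub_nonneg.2 (mem_Iic.1 hy)
  gcongr

end Vertex

section Piecewise

variable {f g k : ℝ → ℝ} {a v : ℝ}

lemma lt_of_eqOn_Iic_of_strictMonoOn_Ici (hg : EqOn f g (Iic a)) (hk : EqOn f k (Ici a))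
    (hv : v ≤ a) (hmin : ∀ z, z ≠ v → g v < g z) (hmono : StrictMonoOn k (Ici a))
    {z : ℝ} (hz : z ≠ v) : f v < f z := by
  rw [hg (mem_Iic.2 hv)]
  rcases le_or_gt z a with hza | haz
  · rw [hg (mem_Iic.2 hza)]
    exact hmin z hz
  · have hga : g v ≤ g a := by
      rcases eq_or_ne a v with rfl | hav
      · rfl
      · exact (hmin a hav).le
    calc g v ≤ g a := hga
      _ = k a := by rw [← hg self_mem_Iic, hk self_mem_Ici]
      _ < k z := hmono self_mem_Ici (mem_Ici.2 haz.le) haz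
      _ = f z := (hk (mem_Ici.2 haz.le)).symm

lemma lt_of_eqOn_Ici_of_strictAntiOn_Iic (hg : EqOn f g (Iic a)) (hk : EqOn f k (Ici a))
    (hv : a ≤ v) (hmin : ∀ z, z ≠ v → k v < k z) (hanti : StrictAntiOn g (Iic a))
    {z : ℝ} (hz : z ≠ v) : f v < f z := by
  rw [hk (mem_Ici.2 hv)]
  rcases le_or_gt a z with haz | hza
  · rw [hk (mem_Ici.2 haz)]
    exact hmin z hz
  · have hka : k v ≤ k a := by
      rcases eq_or_ne a v with rfl | hav
      · rfl
      · exact (hmin a hav).le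
    calc k v ≤ k a := hka
      _ = g a := by rw [← hk self_mem_Ici, hg self_mem_Iic]
      _ < g z := hanti (mem_Iic.2 hza.le) self_mem_Iic hza
      _ = f z := (hg (mem_Iic.2 hza.le)).symm

end Piecewise

def branchObjective (s h p r μbar c ι z : ℝ) : ℝ :=
  (h + r * z ^ 2 + p * (z - c) ^ 2) * s + μbar * (c - ι * z) ^ 2

noncomputable def branchVertex (s p r μbar c ι : ℝ) : ℝ :=
  (p * s + μbar * ι) * c / ((p + r) * s + μbar * ι ^ 2)

section Branch

variable {s h p r μbar c : ℝ}

lemma eqOn_branchObjective_one :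
    EqOn (fun z => (h + r * z ^ 2 + p * (z - c) ^ 2) * s + μbar * (max (-z) 0 + c) ^ 2)
      (branchObjective s h p r μbar c 1) (Iic 0) := by
  intro z hz
  simp only [branchObjective, max_eq_left (neg_nonneg.2 (mem_Iic.1 hz))]
  ring

lemma eqOn_branchObjective_zero :
    EqOn (fun z => (h + r * z ^ 2 + p * (z - c) ^ 2) * s + μbar * (max (-z) 0 + c) ^ 2)
      (branchObjective s h p r μbar c 0) (Ici 0) := by
  intro z hz
  simp only [branchObjective, max_eq_right (neg_nonpos.2 (mem_Ici.1 hz))]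
  ring

variable (s h p r μbar c) in
lemma branchObjective_eq_vertex_add (ι : ℝ) (hA : (p + r) * s + μbar * ι ^ 2 ≠ 0) (z : ℝ) :
    branchObjective s h p r μbar c ι z =
      branchObjective s h p r μbar c ι (branchVertex s p r μbar c ι) +
        ((p + r) * s + μbar * ι ^ 2) * (z - branchVertex s p r μbar c ι) ^ 2 := by
  have hAv : ((p + r) * s + μbar * ι ^ 2) * branchVertex s p r μbar c ι =
      (p * s + μbar * ι) * c := by
    rw [branchVertex]
    field_simp
  unfold branchObjective
  linear_combination (2 * (z - branchVertex s p r μbar c ι)) * hAv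

lemma branchVertex_nonpos {ι : ℝ} (hs : 0 ≤ s) (hp : 0 ≤ p) (hr : 0 ≤ r)
    (hμbar : 0 ≤ μbar) (hι : 0 ≤ ι) (hc : c ≤ 0) : branchVertex s p r μbar c ι ≤ 0 :=
  div_nonpos_of_nonpos_of_nonneg (mul_nonpos_of_nonneg_of_nonpos (by positivity) hc) (by positivity)

lemma branchVertex_nonneg {ι : ℝ} (hs : 0 ≤ s) (hp : 0 ≤ p) (hr : 0 ≤ r)
    (hμbar : 0 ≤ μbar) (hι : 0 ≤ ι) (hc : 0 ≤ c) : 0 ≤ branchVertex s p r μbar c ι := by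
  unfold branchVertex
  positivity

end Branch

/-- Without responsiveness incentives, the function
`z ↦ (h + rz² + p(z−c)²)s + μ̄(z⁻+c)²` attains its infimum over `ℝ` at the unique point
`z* = Λc` where `Λ = (ps + μ̄·𝟙_{c<0})/((p+r)s + μ̄·𝟙_{c<0})`. -/
theorem second_best_no_responsiveness_minimiser
    (s h p r μbar c : ℝ) (hs : 0 < s) (hp : 0 < p) (hr : 0 < r) (hμbar : 0 < μbar)
    (Λ : ℝ)
    (hΛ : Λ = (p * s + μbar * (if c < 0 then 1 else 0)) /
        ((p + r) * s + μbar * (if c < 0 then 1 else 0)))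
    (f : ℝ → ℝ)
    (hf : f = fun z =>
      (h + r * z ^ 2 + p * (z - c) ^ 2) * s + μbar * (max (-z) 0 + c) ^ 2)
    (zstar : ℝ) (hzstar : zstar = Λ * c) :
    (∀ z : ℝ, f zstar ≤ f z) ∧ (∀ z : ℝ, z ≠ zstar → f zstar < f z) := by
  have strict : ∀ z, z ≠ zstar → f zstar < f z := by
    subst hf
    have hvertex (ι : ℝ) := branchObjective_eq_vertex_add s h p r μbar c ι (by positivity)
    rcases lt_or_ge c 0 with hc | hc
    · obtain rfl : zstar = branchVertex s p r μbar c 1 := by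
        rw [hzstar, hΛ, if_pos hc, branchVertex, one_pow, div_mul_eq_mul_div]
      exact fun z => lt_of_eqOn_Iic_of_strictMonoOn_Ici eqOn_branchObjective_one
        eqOn_branchObjective_zero
        (branchVertex_nonpos hs.le hp.le hr.le hμbar.le zero_le_one hc.le)
        (fun _ => lt_of_eq_vertex_add (by positivity) (hvertex 1))
        ((strictMonoOn_Ici_of_eq_vertex_add (by positivity) (hvertex 0)).mono
          (Ici_subset_Ici.2 (branchVertex_nonpos hs.le hp.le hr.le hμbar.le le_rfl hc.le)))
    · obtain rfl : zstar = branchVertex s p r μbar c 0 := by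
        rw [hzstar, hΛ, if_neg hc.not_gt, branchVertex, zero_pow two_ne_zero, div_mul_eq_mul_div]
      exact fun z => lt_of_eqOn_Ici_of_strictAntiOn_Iic eqOn_branchObjective_one
        eqOn_branchObjective_zero (branchVertex_nonneg hs.le hp.le hr.le hμbar.le le_rfl hc)
        (fun _ => lt_of_eq_vertex_add (by positivity) (hvertex 0))
        ((strictAntiOn_Iic_of_eq_vertex_add (by positivity) (hvertex 1)).mono
          (Iic_subset_Iic.2 (branchVertex_nonneg hs.le hp.le hr.le hμbar.le zero_le_one hc)))
  refine ⟨fun z => ?_, strict⟩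
  rcases eq_or_ne z zstar with rfl | hz
  · rfl
  · exact (strict z hz).le
end

section
/- Let κ, θ ∈ ℝ, δ := κ − θ, s > 0, μ̄ > 0 and p, r > 0. Define Λ := (p s + μ̄·𝟙_{δ<0}) / ((p+r) s + μ̄·𝟙_{δ<0}), π_FB := (r κ + p θ)/(r+p) and π⁰_SB := (1 − Λ) κ + Λ θ. Then Λ ≥ p/(r+p) and π_FB − π⁰_SB = (Λ − p/(r+p)) δ; in particular π_FB ≥ π⁰_SB when δ ≥ 0 and π_FB ≤ π⁰_SB when δ ≤ 0. -/
/-!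
Both prices are convex combinations of `κ` and `θ`: `π_FB` puts weight `p/(r+p) = p s/((p+r) s)`
on `θ` and `π⁰_SB` puts weight `Λ` on it, so their difference is the difference of the weights
times `δ`. Adding the same nonnegative amount `μ̄ 𝟙_{δ<0}` to the numerator and denominator of a
fraction at most `1` cannot decrease it, hence `Λ ≥ p/(r+p)`.
-/

section LinearOrderedField

variable {K : Type*} [Field K] [LinearOrder K] [IsStrictOrderedRing K]

theorem div_le_add_div_add {a b c : K} (hb : 0 < b) (hab : a ≤ b) (hc : 0 ≤ c) :
    a / b ≤ (a + c) / (b + c) := by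
  rw [div_le_div_iff₀ hb (by linarith)]
  nlinarith

end LinearOrderedField

section Field

variable {K : Type*} [Field K]

theorem convexCombination_sub_convexCombination (v w x y : K) :
    ((1 - v) * x + v * y) - ((1 - w) * x + w * y) = (w - v) * (x - y) := by
  ring

theorem div_add_div_eq_convexCombination {a b : K} (hab : a + b ≠ 0) (x y : K) :
    (a * x + b * y) / (a + b) = (1 - b / (a + b)) * x + b / (a + b) * y := by
  field_simp
  ring

end Field

/-- Comparison of the first-best energy price with the second-best energy price
without responsiveness incentives: `Λ ≥ p/(r+p)` and `π_FB − π⁰_SB = (Λ − p/(r+p))δ`; in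
particular `π_FB ≥ π⁰_SB` when `δ ≥ 0` and `π_FB ≤ π⁰_SB` when `δ ≤ 0`. -/
theorem energy_price_comparison
    (κ θ δ s μbar p r : ℝ) (hδ : δ = κ - θ) (hs : 0 < s) (hμbar : 0 < μbar)
    (hp : 0 < p) (hr : 0 < r)
    (Λ : ℝ)
    (hΛ : Λ = (p * s + μbar * (if δ < 0 then 1 else 0)) /
        ((p + r) * s + μbar * (if δ < 0 then 1 else 0)))
    (πFB : ℝ) (hπFB : πFB = (r * κ + p * θ) / (r + p))
    (πSB : ℝ) (hπSB : πSB = (1 - Λ) * κ + Λ * θ) :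
    p / (r + p) ≤ Λ ∧
      πFB - πSB = (Λ - p / (r + p)) * δ ∧
      (0 ≤ δ → πSB ≤ πFB) ∧
      (δ ≤ 0 → πFB ≤ πSB) := by
  have hrp : 0 < r + p := by positivity
  have hweight : p / (r + p) ≤ Λ := by
    have hshift : 0 ≤ μbar * (if δ < 0 then 1 else 0) := by positivity
    calc p / (r + p) = p * s / ((p + r) * s) := by rw [mul_div_mul_right _ _ hs.ne', add_comm]
      _ ≤ Λ := hΛ ▸ div_le_add_div_add (by positivity) (by nlinarith) hshift
  have hgap : πFB - πSB = (Λ - p / (r + p)) * δ := by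
    rw [hπFB, hπSB, hδ, div_add_div_eq_convexCombination hrp.ne',
      convexCombination_sub_convexCombination]
  have hweight_gap : 0 ≤ Λ - p / (r + p) := sub_nonneg.mpr hweight
  refine ⟨hweight, hgap, fun hδ_nonneg => ?_, fun hδ_nonpos => ?_⟩
  · exact sub_nonneg.mp (hgap ▸ mul_nonneg hweight_gap hδ_nonneg)
  · exact sub_nonpos.mp (hgap ▸ mul_nonpos_of_nonneg_of_nonpos hweight_gap hδ_nonpos)
end

section
/- Let T > 0, δ ≥ 0, h ≥ 0, p, r > 0, μ̄ > 0 and ρ := rp/(r+p). For t ∈ [0,T] define m_FB(t) := (1/2) μ̄ (δ⁻)² (T−t)² + H_v(−h − ρ δ² (T−t)²) and m_SB(t) := (1/2) μ̄ δ² (T−t)² − (1/2) inf_{z ∈ ℝ} { F₀(h + r z² + p(z − δ(T−t))²) + μ̄ (z⁻ + δ(T−t))² }. Then m_FB(t) = m_SB(t) for every t ∈ [0,T]; in particular ∫_0^T m_FB(t) dt = ∫_0^T m_SB(t) dt, i.e. the informational rent vanishes during off-peak periods. -/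
/-!
The paper's `φ` is a minimum of affine functions: `φ x = min_{b ∈ [ε,1]} (1/b - 1 + x b)`,
attained at `b = 1`, `b = x^{-1/2}` and `b = ε` on its three branches. Summing over `j`,
`F₀ q = min_{b ∈ B} (c₂ b + q |σ(b)|²)`, so the first-best density is
`-F₀(h + ρ a²) / 2` with `a = δ (T - t) ≥ 0`. On the second-best side `F₀` is monotone and
`r z² + p (z - a)² ≥ ρ a²`, with equality at `z = p a / (r + p) ≥ 0`, where `z⁻ = 0` also
minimises `(z⁻ + a)²`; so the infimum over `z` is `F₀(h + ρ a²) + μ̄ a²` and the densities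
agree.
-/

open Set

noncomputable def phiTrunc (ε x : ℝ) : ℝ :=
  if x ≤ 1 then x else if x < (ε ^ 2)⁻¹ then 2 * Real.sqrt x - 1 else ε * x + ε⁻¹ - 1

section phiTrunc

variable {ε : ℝ}

lemma phiTrunc_le (hε : 0 < ε) {b : ℝ} (hb : b ∈ Icc ε 1) (x : ℝ) :
    phiTrunc ε x ≤ 1 / b - 1 + x * b := by
  obtain ⟨hεb, hb1⟩ := hb
  have hb0 : 0 < b := hε.trans_le hεb
  have hbinv : b * (1 / b) = 1 := by field_simp
  unfold phiTrunc
  split_ifs with h1 h2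
  · -- `1/b - 1 + x b - x = (1 - b) (1/b - x)`
    have : x * b ≤ 1 := by nlinarith
    nlinarith [mul_nonneg (sub_nonneg.2 hb1) (sub_nonneg.2 this)]
  · have hx : 0 ≤ x := by linarith
    have : 2 * Real.sqrt x ≤ 1 / b + x * b := by
      rw [div_add' _ _ _ hb0.ne', le_div_iff₀ hb0]
      calc 2 * Real.sqrt x * b ≤ 1 + (Real.sqrt x * b) ^ 2 := by
            nlinarith [sq_nonneg (Real.sqrt x * b - 1)]
        _ = 1 + x * b * b := by rw [mul_pow, Real.sq_sqrt hx]; ring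
    linarith
  · -- `1/b - 1 + x b - (ε x + 1/ε - 1) = (b - ε) (x - 1/(b ε))`
    push Not at h2
    have hx : 0 < x := lt_of_lt_of_le (by positivity) h2
    have hxε : 1 ≤ x * ε ^ 2 := by
      simpa [inv_mul_cancel₀ (pow_pos hε 2).ne'] using
        mul_le_mul_of_nonneg_right h2 (pow_pos hε 2).le
    have hεinv : ε * ε⁻¹ = 1 := mul_inv_cancel₀ hε.ne'
    have hxbε : x * ε * ε ≤ x * ε * b := by gcongr
    have : 0 ≤ (b - ε) * (x * b * ε - 1) := mul_nonneg (by linarith) (by nlinarith)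
    nlinarith [mul_pos hb0 hε]

lemma isLeast_phiTrunc (hε : ε ∈ Ioo 0 1) (x : ℝ) :
    IsLeast ((fun b => 1 / b - 1 + x * b) '' Icc ε 1) (phiTrunc ε x) := by
  obtain ⟨hε0, hε1⟩ := hε
  refine ⟨?_, fun _ ⟨b, hb, hval⟩ => hval ▸ phiTrunc_le hε0 hb x⟩
  unfold phiTrunc
  split_ifs with h1 h2
  · exact ⟨1, ⟨hε1.le, le_rfl⟩, by ring⟩
  · push Not at h1
    have hs1 : 1 < Real.sqrt x := Real.lt_sqrt_of_sq_lt (by linarith)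
    have hsε : Real.sqrt x < ε⁻¹ := by
      rwa [Real.sqrt_lt' (by positivity), inv_pow]
    have hs0 : 0 < Real.sqrt x := one_pos.trans hs1
    refine ⟨(Real.sqrt x)⁻¹,
      ⟨(le_inv_comm₀ hε0 hs0).2 hsε.le, inv_le_one_of_one_le₀ hs1.le⟩, ?_⟩
    have hsx : x * (Real.sqrt x)⁻¹ = Real.sqrt x := by
      rw [mul_inv_eq_iff_eq_mul₀ hs0.ne', Real.mul_self_sqrt (by linarith)]
    simp only [one_div, inv_inv, hsx]
    ring
  · exact ⟨ε, ⟨le_rfl, hε1.le⟩, by simp only [one_div]; ring⟩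

lemma monotone_phiTrunc (hε : ε ∈ Ioo 0 1) : Monotone (phiTrunc ε) := by
  intro x y hxy
  obtain ⟨b, hb, hyb⟩ := (isLeast_phiTrunc hε y).1
  have hb0 : 0 ≤ b := hε.1.le.trans hb.1
  calc phiTrunc ε x ≤ 1 / b - 1 + x * b := phiTrunc_le hε.1 hb x
    _ ≤ 1 / b - 1 + y * b := by gcongr
    _ = phiTrunc ε y := hyb

end phiTrunc

lemma isLeast_sum_image_pi {ι α M : Type*} [Fintype ι] [AddCommMonoid M] [PartialOrder M]
    [IsOrderedAddMonoid M] {f : ι → α → M} {s : Set α} {m : ι → M}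
    (hm : ∀ j, IsLeast (f j '' s) (m j)) :
    IsLeast ((fun b : ι → α => ∑ j, f j (b j)) '' {b | ∀ j, b j ∈ s}) (∑ j, m j) := by
  choose b hb hbm using fun j => (hm j).1
  refine ⟨⟨b, hb, Finset.sum_congr rfl fun j _ => hbm j⟩, ?_⟩
  rintro _ ⟨c, hc, rfl⟩
  exact Finset.sum_le_sum fun j _ => (hm j).2 ⟨c j, hc j, rfl⟩

noncomputable def F0 {ι : Type*} [Fintype ι] (σ lam : ι → ℝ) (ε q : ℝ) : ℝ :=
  ∑ j, σ j ^ 2 / lam j * phiTrunc ε (lam j * q)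

section F0

variable {ι : Type*} [Fintype ι] {σ lam : ι → ℝ} {ε : ℝ}

lemma isLeast_F0 (hlam : ∀ j, 0 < lam j) (hε : ε ∈ Ioo 0 1) (q : ℝ) :
    IsLeast
      ((fun b : ι → ℝ => ∑ j, σ j ^ 2 / lam j * (1 / b j - 1) + q * ∑ j, σ j ^ 2 * b j) ''
      {b | ∀ j, b j ∈ Icc ε 1}) (F0 σ lam ε q) := by
  have hterm : ∀ j,
      IsLeast ((fun c => σ j ^ 2 / lam j * (1 / c - 1 + lam j * q * c)) '' Icc ε 1)
      (σ j ^ 2 / lam j * phiTrunc ε (lam j * q)) := fun j => by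
    simpa only [image_image] using
      (monotone_mul_left_of_nonneg (by have := hlam j; positivity)).map_isLeast
        (isLeast_phiTrunc hε (lam j * q))
  have hsplit :
      (fun b : ι → ℝ => ∑ j, σ j ^ 2 / lam j * (1 / b j - 1) + q * ∑ j, σ j ^ 2 * b j) =
      fun b => ∑ j, σ j ^ 2 / lam j * (1 / b j - 1 + lam j * q * b j) := by
    funext b
    simp only [Finset.mul_sum, ← Finset.sum_add_distrib]
    refine Finset.sum_congr rfl fun j _ => ?_
    field_simp [(hlam j).ne']
  rw [hsplit]
  exact isLeast_sum_image_pi hterm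

lemma monotone_F0 (hlam : ∀ j, 0 < lam j) (hε : ε ∈ Ioo 0 1) : Monotone (F0 σ lam ε) :=
  fun _ _ hxy => Finset.sum_le_sum fun j _ => by
    have := hlam j
    gcongr
    exact monotone_phiTrunc hε (by gcongr)

end F0

lemma mul_div_add_mul_sq_le {r p : ℝ} (hrp : 0 < r + p) (a z : ℝ) :
    r * p / (r + p) * a ^ 2 ≤ r * z ^ 2 + p * (z - a) ^ 2 := by
  rw [div_mul_eq_mul_div, div_le_iff₀ hrp]
  nlinarith [sq_nonneg ((r + p) * z - p * a)]

lemma isLeast_secondBest_range {F : ℝ → ℝ} (hF : Monotone F) {r p μ a : ℝ} (hr : 0 < r)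
    (hp : 0 < p) (hμ : 0 ≤ μ) (ha : 0 ≤ a) (h : ℝ) :
    IsLeast (range fun z => F (h + r * z ^ 2 + p * (z - a) ^ 2) + μ * (max (-z) 0 + a) ^ 2)
      (F (h + r * p / (r + p) * a ^ 2) + μ * a ^ 2) := by
  have hrp : 0 < r + p := by linarith
  refine ⟨⟨p * a / (r + p), ?_⟩, ?_⟩
  · dsimp only
    rw [max_eq_right (by simp only [neg_nonpos]; positivity), zero_add]
    congr 2
    field_simp
    ring
  · rintro _ ⟨z, rfl⟩
    have hm : 0 ≤ max (-z) 0 := le_max_right _ _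
    dsimp only
    gcongr ?_ + μ * ?_
    · exact hF (by linarith [mul_div_add_mul_sq_le hrp a z])
    · nlinarith

theorem no_information_rent_offpeak_general
    (d : ℕ) (σ lam : Fin d → ℝ)
    (hlam : ∀ j, 0 < lam j)
    (ε : ℝ) (hε : ε ∈ Set.Ioo (0 : ℝ) 1)
    (B : Set (Fin d → ℝ)) (hB : B = {b | ∀ j, b j ∈ Set.Icc ε 1})
    (c₂ : (Fin d → ℝ) → ℝ)
    (hc₂ : c₂ = fun b => ∑ j, (σ j) ^ 2 / lam j * (1 / b j - 1))
    (σsq : (Fin d → ℝ) → ℝ) (hσsq : σsq = fun b => ∑ j, (σ j) ^ 2 * b j)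
    (Hv : ℝ → ℝ)
    (hHv : Hv = fun γ => -(1 / 2) * sInf ((fun b => c₂ b - γ * σsq b) '' B))
    (φ : ℝ → ℝ)
    (hφ : φ = fun x =>
      if x ≤ 1 then x else if x < (ε ^ 2)⁻¹ then 2 * Real.sqrt x - 1 else ε * x + ε⁻¹ - 1)
    (F₀ : ℝ → ℝ) (hF₀ : F₀ = fun q => ∑ j, (σ j) ^ 2 / lam j * φ (lam j * q))
    (T δ h p r μbar ρ : ℝ) (hT : 0 < T) (hδ : 0 ≤ δ)
    (hp : 0 < p) (hr : 0 < r) (hμbar : 0 < μbar) (hρ : ρ = r * p / (r + p))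
    (mFB : ℝ → ℝ)
    (hmFB : mFB = fun t =>
      (1 / 2) * μbar * (max (-δ) 0) ^ 2 * (T - t) ^ 2 + Hv (-h - ρ * δ ^ 2 * (T - t) ^ 2))
    (mSB : ℝ → ℝ)
    (hmSB : mSB = fun t =>
      (1 / 2) * μbar * δ ^ 2 * (T - t) ^ 2 -
        (1 / 2) * sInf (Set.range fun z : ℝ =>
          F₀ (h + r * z ^ 2 + p * (z - δ * (T - t)) ^ 2) +
            μbar * (max (-z) 0 + δ * (T - t)) ^ 2)) :
    (∀ t ∈ Set.Icc (0 : ℝ) T, mFB t = mSB t) ∧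
      (∫ t in (0 : ℝ)..T, mFB t) = ∫ t in (0 : ℝ)..T, mSB t := by
  obtain rfl : F₀ = F0 σ lam ε := by subst hF₀ hφ; rfl
  subst hB hc₂ hσsq hHv hρ
  have hdensity : ∀ t ∈ Icc 0 T, mFB t = mSB t := fun t ⟨_, htT⟩ => by
    have ha : 0 ≤ δ * (T - t) := mul_nonneg hδ (sub_nonneg.2 htT)
    have hFB := (isLeast_F0 (σ := σ) hlam hε (h + r * p / (r + p) * (δ * (T - t)) ^ 2)).csInf_eq
    have hSB :=
      (isLeast_secondBest_range (monotone_F0 (σ := σ) hlam hε) hr hp hμbar.le ha h).csInf_eq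
    have hγ : ∀ b : Fin d → ℝ,
        ∑ j, σ j ^ 2 / lam j * (1 / b j - 1) -
            (-h - r * p / (r + p) * δ ^ 2 * (T - t) ^ 2) * ∑ j, σ j ^ 2 * b j =
          ∑ j, σ j ^ 2 / lam j * (1 / b j - 1) +
            (h + r * p / (r + p) * (δ * (T - t)) ^ 2) * ∑ j, σ j ^ 2 * b j := fun b => by ring
    simp only [hmFB, hmSB, hγ, hFB, hSB, max_eq_right (neg_nonpos.2 hδ)]
    ring
  exact ⟨hdensity, intervalIntegral.integral_congr fun t ht =>
    hdensity t (uIcc_of_le hT.le ▸ ht)⟩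

/-- During off-peak periods (`δ ≥ 0`) the first-best and second-best time
densities coincide, `m_FB(t) = m_SB(t)` for `t ∈ [0,T]`, hence the informational rent
vanishes: `∫_0^T m_FB = ∫_0^T m_SB`. -/
theorem no_information_rent_offpeak
    (d : ℕ) (hd : 1 ≤ d) (σ lam : Fin d → ℝ)
    (hσ : ∀ j, 0 < σ j) (hlam : ∀ j, 0 < lam j)
    (ε : ℝ) (hε : ε ∈ Set.Ioo (0 : ℝ) 1)
    (B : Set (Fin d → ℝ)) (hB : B = {b | ∀ j, b j ∈ Set.Icc ε 1})
    (c₂ : (Fin d → ℝ) → ℝ)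
    (hc₂ : c₂ = fun b => ∑ j, (σ j) ^ 2 / lam j * (1 / b j - 1))
    (σsq : (Fin d → ℝ) → ℝ) (hσsq : σsq = fun b => ∑ j, (σ j) ^ 2 * b j)
    (Hv : ℝ → ℝ)
    (hHv : Hv = fun γ => -(1 / 2) * sInf ((fun b => c₂ b - γ * σsq b) '' B))
    (φ : ℝ → ℝ)
    (hφ : φ = fun x =>
      if x ≤ 1 then x else if x < (ε ^ 2)⁻¹ then 2 * Real.sqrt x - 1 else ε * x + ε⁻¹ - 1)
    (F₀ : ℝ → ℝ) (hF₀ : F₀ = fun q => ∑ j, (σ j) ^ 2 / lam j * φ (lam j * q))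
    (T δ h p r μbar ρ : ℝ) (hT : 0 < T) (hδ : 0 ≤ δ) (hh : 0 ≤ h)
    (hp : 0 < p) (hr : 0 < r) (hμbar : 0 < μbar) (hρ : ρ = r * p / (r + p))
    (mFB : ℝ → ℝ)
    (hmFB : mFB = fun t =>
      (1 / 2) * μbar * (max (-δ) 0) ^ 2 * (T - t) ^ 2 + Hv (-h - ρ * δ ^ 2 * (T - t) ^ 2))
    (mSB : ℝ → ℝ)
    (hmSB : mSB = fun t =>
      (1 / 2) * μbar * δ ^ 2 * (T - t) ^ 2 -
        (1 / 2) * sInf (Set.range fun z : ℝ =>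
          F₀ (h + r * z ^ 2 + p * (z - δ * (T - t)) ^ 2) +
            μbar * (max (-z) 0 + δ * (T - t)) ^ 2)) :
    (∀ t ∈ Set.Icc (0 : ℝ) T, mFB t = mSB t) ∧
      (∫ t in (0 : ℝ)..T, mFB t) = ∫ t in (0 : ℝ)..T, mSB t :=
  no_information_rent_offpeak_general d σ lam hlam ε hε B hB c₂ hc₂ σsq hσsq Hv hHv φ hφ F₀ hF₀ T δ
    h p r μbar ρ hT hδ hp hr hμbar hρ mFB hmFB mSB hmSB
end
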